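/- arXiv:math/9803001 — 6 statements merged into one kernel-verified Lean document; each statement's English description precedes it below -/
import Mathlib

section
/- Let n ≥ 4 and let x, y, z be three distinct elements of Q = {1,…,n}. Then the classes δ_{{y,z}} together with the classes δ_S for the subsets S ⊆ Q with x ∈ S and 2 ≤ |S| ≤ n−3 form a basis of the ℚ-vector space V_n. -/
/-- Subsets `A ⊆ {1,…,n}` with `2 ≤ |A| ≤ n-2`, the index set for the basis of `Wₙ`. -/
abbrev GoodSet (n : ℕ) := {A : Finset (Fin n) // 2 ≤ A.card ∧ A.card ≤ n - 2}

/-- The ℚ-vector space with basis the symbols `δ_A`, `A ⊆ {1,…,n}`, `2 ≤ |A| ≤ n-2`. -/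
abbrev Wn (n : ℕ) := GoodSet n →₀ ℚ

/-- The relations: (i) `δ_A - δ_{Aᶜ}` and (ii) Keel's relations, for four distinct
elements `p,q,r,s`, `(Σ_{p,q∈A, r,s∉A} δ_A) - (Σ_{p,r∈A, q,s∉A} δ_A)`. -/
def keelRelations (n : ℕ) : Set (Wn n) :=
  {w | ∃ A B : GoodSet n, (B : Finset (Fin n)) = (A : Finset (Fin n))ᶜ ∧
        w = Finsupp.single A 1 - Finsupp.single B 1} ∪
  {w | ∃ p q r s : Fin n, p ≠ q ∧ p ≠ r ∧ p ≠ s ∧ q ≠ r ∧ q ≠ s ∧ r ≠ s ∧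
        w = (∑ A ∈ Finset.univ.filter
              (fun A : GoodSet n => p ∈ A.1 ∧ q ∈ A.1 ∧ r ∉ A.1 ∧ s ∉ A.1),
              Finsupp.single A (1:ℚ))
          - (∑ A ∈ Finset.univ.filter
              (fun A : GoodSet n => p ∈ A.1 ∧ r ∈ A.1 ∧ q ∉ A.1 ∧ s ∉ A.1),
              Finsupp.single A (1:ℚ))}

/-- The quotient space `Vₙ ≅ H²(M̄_{0,n}, ℚ)`. -/
abbrev Vn (n : ℕ) := Wn n ⧸ Submodule.span ℚ (keelRelations n)

/-- The class `δ_A` in `Vₙ` (defined as `0` for `A` out of range). -/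
noncomputable def deltaV (n : ℕ) (A : Finset (Fin n)) : Vn n :=
  if h : 2 ≤ A.card ∧ A.card ≤ n - 2 then
    Submodule.Quotient.mk (Finsupp.single (⟨A, h⟩ : GoodSet n) (1:ℚ))
  else 0

/-! ### Auxiliary development -/

namespace KeelBasis

/-- The index set for the claimed basis (apart from the extra element `none ↦ δ_{y,z}`). -/
abbrev Idx (n : ℕ) (x : Fin n) := {S : Finset (Fin n) // x ∈ S ∧ 2 ≤ S.card ∧ S.card ≤ n - 3}

variable (n : ℕ) (x y z : Fin n)

/-- Helper scalar: `[S ∩ P ≠ ∅] - [S ∩ {y,z} ≠ ∅]`. -/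
def gq (S P : Finset (Fin n)) : ℚ :=
  (if (S ∩ P).Nonempty then 1 else 0) - (if (S ∩ ({y, z} : Finset (Fin n))).Nonempty then 1 else 0)

/-- The coordinate functionals for the claimed basis. -/
def ell : Option (Idx n x) → Finset (Fin n) → ℚ
  | none, A => (if x ∈ A ∧ A.card = n - 2 then 1 else 0) + (if x ∉ A ∧ A.card = 2 then 1 else 0)
  | some S, A =>
      ((if A = S.1 then 1 else 0) + (if A = (S.1)ᶜ then 1 else 0))
      + ((if x ∉ A ∧ A.card = 2 then gq n y z S.1 A else 0)
        + (if x ∈ A ∧ A.card = n - 2 then gq n y z S.1 Aᶜ else 0))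

lemma card_compl' (A : Finset (Fin n)) : Aᶜ.card = n - A.card := by
  rw [Finset.card_compl, Fintype.card_fin]

variable {n x y z}

lemma inter_pair_nonempty (S : Finset (Fin n)) (a b : Fin n) :
    (S ∩ ({a, b} : Finset (Fin n))).Nonempty ↔ a ∈ S ∨ b ∈ S := by
  constructor
  · rintro ⟨c, hc⟩
    simp only [Finset.mem_inter, Finset.mem_insert, Finset.mem_singleton] at hc
    rcases hc.2 with h | h
    · exact Or.inl (h ▸ hc.1)
    · exact Or.inr (h ▸ hc.1)
  · rintro (h | h)
    · exact ⟨a, by simp [h]⟩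
    · exact ⟨b, by simp [h]⟩

/-- Complement-invariance of the coordinate functionals. -/
lemma ell_compl (hn : 4 ≤ n) (i : Option (Idx n x)) (A : Finset (Fin n))
    (h2 : 2 ≤ A.card) (h2' : A.card ≤ n - 2) :
    ell n x y z i Aᶜ = ell n x y z i A := by
  have hcc : Aᶜ.card = n - A.card := card_compl' n A
  have hAcard : A.card ≤ n := A.card_le_univ.trans (by simp)
  have hc2 : Aᶜ.card = 2 ↔ A.card = n - 2 := by omega
  have hcn2 : Aᶜ.card = n - 2 ↔ A.card = 2 := by omega
  have hxc : x ∈ Aᶜ ↔ x ∉ A := Finset.mem_compl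
  have e1 : x ∈ Aᶜ ∧ Aᶜ.card = n - 2 ↔ x ∉ A ∧ A.card = 2 := by rw [hxc, hcn2]
  have e2 : x ∉ Aᶜ ∧ Aᶜ.card = 2 ↔ x ∈ A ∧ A.card = n - 2 := by rw [hxc, hc2, not_not]
  cases i with
  | none =>
      simp only [ell, e1, e2]
      ring
  | some S =>
      have e3 : Aᶜ = S.1 ↔ A = (S.1)ᶜ := by
        constructor
        · intro h; rw [← h, compl_compl]
        · intro h; rw [h, compl_compl]
      have e4 : Aᶜ = (S.1)ᶜ ↔ A = S.1 := compl_inj_iff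
      simp only [ell, e1, e2, e3, e4, compl_compl]
      ring

end KeelBasis

namespace KeelBasis

variable {n : ℕ} {x y z : Fin n}

/-- The separating sets for `p,q | r,s`, as a finset of `GoodSet n`. -/
def sepF (n : ℕ) (p q r s : Fin n) : Finset (GoodSet n) :=
  Finset.univ.filter (fun A : GoodSet n => p ∈ A.1 ∧ q ∈ A.1 ∧ r ∉ A.1 ∧ s ∉ A.1)

lemma mem_sepF {p q r s : Fin n} {A : GoodSet n} :
    A ∈ sepF n p q r s ↔ p ∈ A.1 ∧ q ∈ A.1 ∧ r ∉ A.1 ∧ s ∉ A.1 := by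
  simp [sepF]

/-- L1: summing the indicator of a fixed good set over the separating sets. -/
lemma sum_ite_eq_sep {p q r s : Fin n} (B : Finset (Fin n))
    (hB : 2 ≤ B.card ∧ B.card ≤ n - 2) (c : ℚ) :
    ∑ A ∈ sepF n p q r s, (if A.1 = B then c else 0)
      = if p ∈ B ∧ q ∈ B ∧ r ∉ B ∧ s ∉ B then c else 0 := by
  have : ∀ A : GoodSet n, (A.1 = B) = (A = ⟨B, hB⟩) := by
    intro A; rw [eq_iff_iff]; exact ⟨fun h => Subtype.ext h, fun h => by rw [h]⟩
  simp only [this]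
  rw [Finset.sum_ite_eq' (sepF n p q r s) (⟨B, hB⟩ : GoodSet n) (fun _ => c)]
  congr 1
  rw [eq_iff_iff, mem_sepF]

/-- L2: summing a term supported on 2-element sets over the separating sets. -/
lemma sum_pair_sep (hn : 4 ≤ n) {p q r s : Fin n} (hpq : p ≠ q) (hpr : p ≠ r)
    (hps : p ≠ s) (hqr : q ≠ r) (hqs : q ≠ s) (φ : Finset (Fin n) → ℚ) :
    ∑ A ∈ sepF n p q r s, (if x ∉ A.1 ∧ A.1.card = 2 then φ A.1 else 0)
      = if x ∉ ({p, q} : Finset (Fin n)) then φ {p, q} else 0 := by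
  have hcard : ({p, q} : Finset (Fin n)).card = 2 := Finset.card_pair hpq
  have hgood : 2 ≤ ({p, q} : Finset (Fin n)).card ∧ ({p, q} : Finset (Fin n)).card ≤ n - 2 := by
    rw [hcard]; omega
  have hmem : (⟨{p, q}, hgood⟩ : GoodSet n) ∈ sepF n p q r s := by
    rw [mem_sepF]
    refine ⟨?_, ?_, ?_, ?_⟩ <;> simp [hpr.symm, hqr.symm, hps.symm, hqs.symm]
  rw [Finset.sum_eq_single_of_mem _ hmem]
  · simp only [hcard, and_true]
  · intro A hA hne
    rw [if_neg]
    rintro ⟨-, hA2⟩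
    rw [mem_sepF] at hA
    have hsub : ({p, q} : Finset (Fin n)) ⊆ A.1 := by
      intro t ht
      simp only [Finset.mem_insert, Finset.mem_singleton] at ht
      rcases ht with h | h <;> subst h
      exacts [hA.1, hA.2.1]
    have : A.1 = {p, q} :=
      (Finset.eq_of_subset_of_card_le hsub (by omega)).symm
    exact hne (Subtype.ext this)

/-- L3: summing a term supported on `(n-2)`-element sets over the separating sets. -/
lemma sum_copair_sep (hn : 4 ≤ n) {p q r s : Fin n} (hpr : p ≠ r)
    (hps : p ≠ s) (hqr : q ≠ r) (hqs : q ≠ s) (hrs : r ≠ s) (φ : Finset (Fin n) → ℚ) :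
    ∑ A ∈ sepF n p q r s, (if x ∈ A.1 ∧ A.1.card = n - 2 then φ A.1ᶜ else 0)
      = if x ∉ ({r, s} : Finset (Fin n)) then φ {r, s} else 0 := by
  have hcard2 : ({r, s} : Finset (Fin n)).card = 2 := Finset.card_pair hrs
  have hcard : (({r, s} : Finset (Fin n))ᶜ).card = n - 2 := by
    rw [card_compl' n, hcard2]
  have hgood : 2 ≤ (({r, s} : Finset (Fin n))ᶜ).card ∧
      (({r, s} : Finset (Fin n))ᶜ).card ≤ n - 2 := by rw [hcard]; omega
  have hmem : (⟨({r, s} : Finset (Fin n))ᶜ, hgood⟩ : GoodSet n) ∈ sepF n p q r s := by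
    rw [mem_sepF]
    refine ⟨?_, ?_, ?_, ?_⟩ <;> simp [hpr, hps, hqr, hqs]
  rw [Finset.sum_eq_single_of_mem _ hmem]
  · simp only [hcard, and_true, compl_compl, Finset.mem_compl]
  · intro A hA hne
    rw [if_neg]
    rintro ⟨-, hA2⟩
    rw [mem_sepF] at hA
    have hsub : ({r, s} : Finset (Fin n)) ⊆ A.1ᶜ := by
      intro t ht
      simp only [Finset.mem_insert, Finset.mem_singleton] at ht
      rw [Finset.mem_compl]
      rcases ht with h | h <;> subst h
      exacts [hA.2.2.1, hA.2.2.2]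
    have hcc : A.1ᶜ.card = n - A.1.card := card_compl' n A.1
    have hA1n : A.1.card ≤ n := A.1.card_le_univ.trans (by simp)
    have : A.1ᶜ = {r, s} :=
      (Finset.eq_of_subset_of_card_le hsub (by rw [hcard2]; omega)).symm
    have : A.1 = ({r, s} : Finset (Fin n))ᶜ := by rw [← this, compl_compl]
    exact hne (Subtype.ext this)

end KeelBasis

namespace KeelBasis

variable {n : ℕ} {x y z : Fin n}

lemma key_none (e1 e2 e3 e4 : Prop) [Decidable e1] [Decidable e2] [Decidable e3] [Decidable e4]
    (h12 : ¬(e1 ∧ e2)) (h13 : ¬(e1 ∧ e3)) (h14 : ¬(e1 ∧ e4))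
    (h23 : ¬(e2 ∧ e3)) (h24 : ¬(e2 ∧ e4)) (h34 : ¬(e3 ∧ e4)) :
    (if ¬(e3 ∨ e4) then (1:ℚ) else 0) + (if ¬(e1 ∨ e2) then (1:ℚ) else 0)
      = (if ¬(e2 ∨ e4) then (1:ℚ) else 0) + (if ¬(e1 ∨ e3) then (1:ℚ) else 0) := by
  by_cases e1 <;> by_cases e2 <;> by_cases e3 <;> by_cases e4 <;> simp_all

lemma key_abstract (u : ℚ) (a b c d e1 e2 e3 e4 : Prop)
    [Decidable a] [Decidable b] [Decidable c] [Decidable d]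
    [Decidable e1] [Decidable e2] [Decidable e3] [Decidable e4]
    (h1 : e1 → a) (h2 : e2 → b) (h3 : e3 → c) (h4 : e4 → d)
    (h12 : ¬(e1 ∧ e2)) (h13 : ¬(e1 ∧ e3)) (h14 : ¬(e1 ∧ e4))
    (h23 : ¬(e2 ∧ e3)) (h24 : ¬(e2 ∧ e4)) (h34 : ¬(e3 ∧ e4)) :
    ((if a ∧ b ∧ ¬c ∧ ¬d then (1:ℚ) else 0) + (if ¬a ∧ ¬b ∧ c ∧ d then (1:ℚ) else 0))
    + ((if ¬(e1 ∨ e2) then (if a ∨ b then (1:ℚ) else 0) - u else 0)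
      + (if ¬(e3 ∨ e4) then (if c ∨ d then (1:ℚ) else 0) - u else 0))
    = ((if a ∧ c ∧ ¬b ∧ ¬d then (1:ℚ) else 0) + (if ¬a ∧ ¬c ∧ b ∧ d then (1:ℚ) else 0))
    + ((if ¬(e1 ∨ e3) then (if a ∨ c then (1:ℚ) else 0) - u else 0)
      + (if ¬(e2 ∨ e4) then (if b ∨ d then (1:ℚ) else 0) - u else 0)) := by
  by_cases e1 <;> by_cases e2 <;> by_cases e3 <;> by_cases e4 <;>
    by_cases a <;> by_cases b <;> by_cases c <;> by_cases d <;>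
    simp_all <;> ring

/-- The heart of the matter: each coordinate functional satisfies the Keel relations. -/
lemma sum_ell_sep (hn : 4 ≤ n) (i : Option (Idx n x)) {p q r s : Fin n}
    (hpq : p ≠ q) (hpr : p ≠ r) (hps : p ≠ s) (hqr : q ≠ r) (hqs : q ≠ s) (hrs : r ≠ s) :
    ∑ A ∈ sepF n p q r s, ell n x y z i A.1
      = ∑ A ∈ sepF n p r q s, ell n x y z i A.1 := by
  have hxnot : ∀ a b : Fin n, a ≠ b →
      (x ∉ ({a, b} : Finset (Fin n))) = ¬(x = a ∨ x = b) := by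
    intro a b _; simp
  cases i with
  | none =>
      simp only [ell]
      rw [Finset.sum_add_distrib, Finset.sum_add_distrib,
        sum_copair_sep hn hpr hps hqr hqs hrs (fun _ => (1:ℚ)),
        sum_pair_sep hn hpq hpr hps hqr hqs (fun _ => (1:ℚ)),
        sum_copair_sep hn hpq hps hqr.symm hrs hqs (fun _ => (1:ℚ)),
        sum_pair_sep hn hpr hpq hps hqr.symm hrs (fun _ => (1:ℚ))]
      simp only [Finset.mem_insert, Finset.mem_singleton]
      exact key_none (x = p) (x = q) (x = r) (x = s)
        (by rintro ⟨rfl, h⟩; exact hpq h)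
        (by rintro ⟨rfl, h⟩; exact hpr h)
        (by rintro ⟨rfl, h⟩; exact hps h)
        (by rintro ⟨rfl, h⟩; exact hqr h)
        (by rintro ⟨rfl, h⟩; exact hqs h)
        (by rintro ⟨rfl, h⟩; exact hrs h)
  | some S =>
      obtain ⟨hxS, hS2, hS3⟩ := S.2
      have hScard : S.1.card ≤ n := S.1.card_le_univ.trans (by simp)
      have hgood1 : 2 ≤ S.1.card ∧ S.1.card ≤ n - 2 := ⟨hS2, by omega⟩
      have hgood2 : 2 ≤ (S.1ᶜ).card ∧ (S.1ᶜ).card ≤ n - 2 := by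
        rw [card_compl' n]; omega
      simp only [ell]
      rw [Finset.sum_add_distrib, Finset.sum_add_distrib, Finset.sum_add_distrib,
        Finset.sum_add_distrib, Finset.sum_add_distrib, Finset.sum_add_distrib,
        sum_ite_eq_sep S.1 hgood1 1, sum_ite_eq_sep (S.1ᶜ) hgood2 1,
        sum_pair_sep hn hpq hpr hps hqr hqs (gq n y z S.1),
        sum_copair_sep hn hpr hps hqr hqs hrs (gq n y z S.1),
        sum_ite_eq_sep S.1 hgood1 1, sum_ite_eq_sep (S.1ᶜ) hgood2 1,
        sum_pair_sep hn hpr hpq hps hqr.symm hrs (gq n y z S.1),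
        sum_copair_sep hn hpq hps hqr.symm hrs hqs (gq n y z S.1)]
      simp only [gq, inter_pair_nonempty, Finset.mem_compl, Finset.mem_insert,
        Finset.mem_singleton, not_not]
      exact key_abstract (if y ∈ S.1 ∨ z ∈ S.1 then (1:ℚ) else 0)
        (p ∈ S.1) (q ∈ S.1) (r ∈ S.1) (s ∈ S.1) (x = p) (x = q) (x = r) (x = s)
        (fun h => h ▸ hxS) (fun h => h ▸ hxS) (fun h => h ▸ hxS) (fun h => h ▸ hxS)
        (by rintro ⟨rfl, h⟩; exact hpq h)
        (by rintro ⟨rfl, h⟩; exact hpr h)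
        (by rintro ⟨rfl, h⟩; exact hps h)
        (by rintro ⟨rfl, h⟩; exact hqr h)
        (by rintro ⟨rfl, h⟩; exact hqs h)
        (by rintro ⟨rfl, h⟩; exact hrs h)

end KeelBasis

namespace KeelBasis

variable (n : ℕ) (x y z : Fin n)

/-- Coordinate vector of `δ_A`. -/
noncomputable def vfun : GoodSet n → (Option (Idx n x) →₀ ℚ) :=
  fun A => ∑ i : Option (Idx n x), ell n x y z i A.1 • Finsupp.single i 1

/-- The coordinate linear map `Wₙ → ℚ^(basis)`. -/
noncomputable def fmap : Wn n →ₗ[ℚ] (Option (Idx n x) →₀ ℚ) :=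
  Finsupp.linearCombination ℚ (vfun n x y z)

variable {n x y z}

lemma fmap_single (A : GoodSet n) :
    fmap n x y z (Finsupp.single A 1) = vfun n x y z A := by
  rw [fmap, Finsupp.linearCombination_single, one_smul]

lemma vfun_eval (A : GoodSet n) (i0 : Option (Idx n x))
    (h : ∀ i, ell n x y z i A.1 = if i = i0 then 1 else 0) :
    vfun n x y z A = Finsupp.single i0 1 := by
  rw [vfun]
  rw [Finset.sum_congr rfl (fun i _ => by
    rw [h i, ite_smul, one_smul, zero_smul])]
  rw [Finset.sum_ite_eq' Finset.univ i0 (fun i => Finsupp.single i (1:ℚ)),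
    if_pos (Finset.mem_univ i0)]

lemma ell_yz (hn : 4 ≤ n) (hxy : x ≠ y) (hxz : x ≠ z) (hyz : y ≠ z)
    (i : Option (Idx n x)) :
    ell n x y z i ({y, z} : Finset (Fin n)) = if i = none then 1 else 0 := by
  have hxyz : x ∉ ({y, z} : Finset (Fin n)) := by simp [hxy, hxz]
  have hcard : ({y, z} : Finset (Fin n)).card = 2 := Finset.card_pair hyz
  cases i with
  | none =>
      have h1 : ¬(x ∈ ({y, z} : Finset (Fin n)) ∧ ({y, z} : Finset (Fin n)).card = n - 2) :=
        fun h => hxyz h.1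
      have h2 : x ∉ ({y, z} : Finset (Fin n)) ∧ ({y, z} : Finset (Fin n)).card = 2 :=
        ⟨hxyz, hcard⟩
      simp only [ell]
      rw [if_neg h1, if_pos h2]
      norm_num
  | some S =>
      obtain ⟨hxS, hS2, hS3⟩ := S.2
      have hScard : S.1.card ≤ n := S.1.card_le_univ.trans (by simp)
      have h1 : ¬(({y, z} : Finset (Fin n)) = S.1) := fun h => hxyz (h ▸ hxS)
      have h2 : ¬(({y, z} : Finset (Fin n)) = (S.1)ᶜ) := by
        intro h
        have := congrArg Finset.card h
        rw [hcard, card_compl' n] at this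
        omega
      have h3 : x ∉ ({y, z} : Finset (Fin n)) ∧ ({y, z} : Finset (Fin n)).card = 2 :=
        ⟨hxyz, hcard⟩
      have h4 : ¬(x ∈ ({y, z} : Finset (Fin n)) ∧ ({y, z} : Finset (Fin n)).card = n - 2) :=
        fun h => hxyz h.1
      simp only [ell, gq]
      rw [if_neg h1, if_neg h2, if_pos h3, if_neg h4]
      simp

lemma ell_cand (hn : 4 ≤ n) (S0 : Idx n x) (i : Option (Idx n x)) :
    ell n x y z i S0.1 = if i = some S0 then 1 else 0 := by
  obtain ⟨hxS0, hS02, hS03⟩ := S0.2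
  have hScard : S0.1.card ≤ n := S0.1.card_le_univ.trans (by simp)
  have hne2 : ¬((S0.1).card = n - 2) := by omega
  cases i with
  | none =>
      have h1 : ¬(x ∈ S0.1 ∧ (S0.1).card = n - 2) := fun h => hne2 h.2
      have h2 : ¬(x ∉ S0.1 ∧ (S0.1).card = 2) := fun h => h.1 hxS0
      simp only [ell]
      rw [if_neg h1, if_neg h2]
      simp
  | some S =>
      obtain ⟨hxS, hS2, hS3⟩ := S.2
      have h2 : ¬(S0.1 = (S.1)ᶜ) := fun h => (Finset.mem_compl.mp (h ▸ hxS0)) hxS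
      have h3 : ¬(x ∉ S0.1 ∧ (S0.1).card = 2) := fun h => h.1 hxS0
      have h4 : ¬(x ∈ S0.1 ∧ (S0.1).card = n - 2) := fun h => hne2 h.2
      have h1 : (S0.1 = S.1) = (some S = some S0) := by
        rw [eq_iff_iff]
        constructor
        · intro h; rw [Subtype.ext (h.symm)]
        · intro h; rw [show S = S0 from Option.some_injective _ h]
      simp only [ell, gq]
      rw [if_neg h2, if_neg h3, if_neg h4]
      simp only [h1]
      norm_num

/-- `f` kills all the Keel relations. -/
lemma fmap_rel (hn : 4 ≤ n) : ∀ w ∈ keelRelations n, fmap n x y z w = 0 := by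
  rintro w (⟨A, B, hBA, rfl⟩ | ⟨p, q, r, s, hpq, hpr, hps, hqr, hqs, hrs, rfl⟩)
  · rw [map_sub, fmap_single, fmap_single, sub_eq_zero]
    unfold vfun
    exact Finset.sum_congr rfl fun i _ => by
      rw [hBA, ell_compl hn i A.1 A.2.1 A.2.2]
  · rw [map_sub, sub_eq_zero, map_sum, map_sum]
    have hl : ∀ a b c d : Fin n,
        ∑ A ∈ sepF n a b c d, fmap n x y z (Finsupp.single A 1)
          = ∑ i : Option (Idx n x),
              (∑ A ∈ sepF n a b c d, ell n x y z i A.1) • Finsupp.single i (1:ℚ) := by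
      intro a b c d
      rw [Finset.sum_congr rfl (fun A _ => fmap_single A)]
      unfold vfun
      rw [Finset.sum_comm]
      exact Finset.sum_congr rfl fun i _ => (Finset.sum_smul).symm
    show ∑ A ∈ sepF n p q r s, fmap n x y z (Finsupp.single A 1)
        = ∑ A ∈ sepF n p r q s, fmap n x y z (Finsupp.single A 1)
    rw [hl, hl]
    exact Finset.sum_congr rfl fun i _ => by
      rw [sum_ell_sep hn i hpq hpr hps hqr hqs hrs]

end KeelBasis

namespace KeelBasis

variable (n : ℕ) (x y z : Fin n)

/-- class of `δ_A` in the quotient. -/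
noncomputable def dmk : GoodSet n → Vn n :=
  fun A => Submodule.Quotient.mk (Finsupp.single A 1)

/-- The candidate basis vectors. -/
noncomputable def vclass : Option (Idx n x) → Vn n :=
  fun i => match i with
    | none => deltaV n {y, z}
    | some S => deltaV n S.1

/-- The span of the candidate basis vectors. -/
noncomputable def Mspan : Submodule ℚ (Vn n) :=
  Submodule.span ℚ (Set.range (vclass n x y z))

variable {n x y z}

lemma deltaV_eq_dmk (A : Finset (Fin n)) (h : 2 ≤ A.card ∧ A.card ≤ n - 2) :
    deltaV n A = dmk n ⟨A, h⟩ := dif_pos h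

lemma dmk_compl (A : GoodSet n) (h : 2 ≤ (A.1ᶜ).card ∧ (A.1ᶜ).card ≤ n - 2) :
    dmk n A = dmk n ⟨A.1ᶜ, h⟩ := by
  rw [dmk, dmk, Submodule.Quotient.eq]
  exact Submodule.subset_span (Or.inl ⟨A, ⟨A.1ᶜ, h⟩, rfl, rfl⟩)

lemma dmk_sep {p q r s : Fin n} (hpq : p ≠ q) (hpr : p ≠ r) (hps : p ≠ s)
    (hqr : q ≠ r) (hqs : q ≠ s) (hrs : r ≠ s) :
    ∑ A ∈ sepF n p q r s, dmk n A = ∑ A ∈ sepF n p r q s, dmk n A := by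
  have hrel : ((∑ A ∈ sepF n p q r s, Finsupp.single A (1:ℚ))
      - (∑ A ∈ sepF n p r q s, Finsupp.single A (1:ℚ))) ∈ Submodule.span ℚ (keelRelations n) :=
    Submodule.subset_span (Or.inr ⟨p, q, r, s, hpq, hpr, hps, hqr, hqs, hrs, rfl⟩)
  have h0 := (Submodule.Quotient.mk_eq_zero _).2 hrel
  rw [← Submodule.mkQ_apply, map_sub, map_sum, map_sum, sub_eq_zero] at h0
  simp only [Submodule.mkQ_apply] at h0
  exact h0

variable (hn : 4 ≤ n) (hxy : x ≠ y) (hxz : x ≠ z) (hyz : y ≠ z)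

lemma cand_mem_M (S : Finset (Fin n)) (hS : x ∈ S ∧ 2 ≤ S.card ∧ S.card ≤ n - 3)
    (hg : 2 ≤ S.card ∧ S.card ≤ n - 2) :
    dmk n ⟨S, hg⟩ ∈ Mspan n x y z := by
  have : vclass n x y z (some ⟨S, hS⟩) = dmk n ⟨S, hg⟩ := deltaV_eq_dmk S hg
  exact this ▸ Submodule.subset_span (Set.mem_range_self (some (⟨S, hS⟩ : Idx n x)))

lemma yz_mem_M (hg : 2 ≤ ({y, z} : Finset (Fin n)).card ∧
    ({y, z} : Finset (Fin n)).card ≤ n - 2) :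
    dmk n (⟨{y, z}, hg⟩ : GoodSet n) ∈ Mspan n x y z := by
  have : vclass n x y z none = dmk n ⟨{y, z}, hg⟩ := deltaV_eq_dmk _ hg
  exact this ▸ Submodule.subset_span (Set.mem_range_self none)

lemma pair_good (a b : Fin n) (hn : 4 ≤ n) (hab : a ≠ b) :
    2 ≤ ({a, b} : Finset (Fin n)).card ∧ ({a, b} : Finset (Fin n)).card ≤ n - 2 := by
  rw [Finset.card_pair hab]; omega

end KeelBasis

namespace KeelBasis

variable {n : ℕ} {x y z : Fin n}

set_option maxHeartbeats 1000000 in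
/-- Moving step: `δ_{p,q} ∈ M` provided `δ_{q,w} ∈ M`. -/
lemma step_M (hn : 4 ≤ n) (p q w : Fin n) (hpq : p ≠ q) (hpw : p ≠ w) (hqw : q ≠ w)
    (hxp : x ≠ p) (hxq : x ≠ q) (hxw : x ≠ w)
    (hprev : dmk n ⟨{q, w}, pair_good q w hn hqw⟩ ∈ Mspan n x y z) :
    dmk n ⟨{p, q}, pair_good p q hn hpq⟩ ∈ Mspan n x y z := by
  have hcardn : ∀ A : Finset (Fin n), A.card ≤ n := fun A => A.card_le_univ.trans (by simp)
  set a1 : GoodSet n := ⟨{p, q}, pair_good p q hn hpq⟩ with ha1def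
  have ha1 : a1 ∈ sepF n p q x w := by
    rw [mem_sepF]
    refine ⟨by simp [ha1def], by simp [ha1def], ?_, ?_⟩ <;> simp [ha1def, hxp, hxq, Ne.symm hpw, Ne.symm hqw]
  have hqwgood : 2 ≤ (({q, w} : Finset (Fin n))ᶜ).card ∧
      (({q, w} : Finset (Fin n))ᶜ).card ≤ n - 2 := by
    rw [card_compl' n, Finset.card_pair hqw]; omega
  set a2 : GoodSet n := ⟨({q, w} : Finset (Fin n))ᶜ, hqwgood⟩ with ha2def
  have ha2 : a2 ∈ sepF n p x q w := by
    rw [mem_sepF]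
    refine ⟨?_, ?_, ?_, ?_⟩ <;>
      simp [ha2def, hpq, hpw, hxq, hxw]
  have h1 : ∀ A ∈ (sepF n p q x w).erase a1, dmk n A ∈ Mspan n x y z := by
    intro A hA
    obtain ⟨hAne, hAmem⟩ := Finset.mem_erase.mp hA
    rw [mem_sepF] at hAmem
    have h3 : 3 ≤ A.1.card := by
      by_contra hlt
      have hA2 : A.1.card = 2 := by have := A.2.1; omega
      have hsub : ({p, q} : Finset (Fin n)) ⊆ A.1 := by
        intro t ht
        simp only [Finset.mem_insert, Finset.mem_singleton] at ht
        rcases ht with h | h <;> subst h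
        exacts [hAmem.1, hAmem.2.1]
      have : A.1 = {p, q} :=
        (Finset.eq_of_subset_of_card_le hsub (by rw [Finset.card_pair hpq]; omega)).symm
      exact hAne (Subtype.ext this)
    have hcompl : 2 ≤ (A.1ᶜ).card ∧ (A.1ᶜ).card ≤ n - 2 := by
      rw [card_compl' n]
      have := A.2.2; have := hcardn A.1; omega
    rw [dmk_compl A hcompl]
    refine cand_mem_M A.1ᶜ ⟨Finset.mem_compl.mpr hAmem.2.2.1, hcompl.1, ?_⟩ hcompl
    rw [card_compl' n]; omega
  have h2 : ∀ A ∈ (sepF n p x q w).erase a2, dmk n A ∈ Mspan n x y z := by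
    intro A hA
    obtain ⟨hAne, hAmem⟩ := Finset.mem_erase.mp hA
    rw [mem_sepF] at hAmem
    have h3 : A.1.card ≤ n - 3 := by
      by_contra hlt
      have hA2 : A.1.card = n - 2 := by have := A.2.2; omega
      have hsub : ({q, w} : Finset (Fin n)) ⊆ A.1ᶜ := by
        intro t ht
        simp only [Finset.mem_insert, Finset.mem_singleton] at ht
        rw [Finset.mem_compl]
        rcases ht with h | h <;> subst h
        exacts [hAmem.2.2.1, hAmem.2.2.2]
      have hAc : A.1ᶜ = {q, w} := by
        refine (Finset.eq_of_subset_of_card_le hsub ?_).symm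
        rw [Finset.card_pair hqw, card_compl' n]
        have := hcardn A.1; omega
      have : A.1 = ({q, w} : Finset (Fin n))ᶜ := by rw [← hAc, compl_compl]
      exact hAne (Subtype.ext this)
    exact cand_mem_M A.1 ⟨hAmem.2.1, A.2.1, h3⟩ A.2
  have hsum := dmk_sep hpq hxp.symm hpw (Ne.symm hxq) hqw hxw
  rw [← Finset.add_sum_erase _ _ ha1, ← Finset.add_sum_erase _ _ ha2] at hsum
  have ha2prev : dmk n a2 ∈ Mspan n x y z := by
    have : dmk n a2 = dmk n ⟨{q, w}, pair_good q w hn hqw⟩ := by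
      rw [dmk_compl a2 (by rw [ha2def]; simpa [compl_compl] using pair_good q w hn hqw)]
      exact congrArg (dmk n) (Subtype.ext (compl_compl _))
    rw [this]; exact hprev
  have heq : dmk n a1 = (dmk n a2 + ∑ A ∈ (sepF n p x q w).erase a2, dmk n A)
      - ∑ A ∈ (sepF n p q x w).erase a1, dmk n A := eq_sub_of_add_eq hsum
  rw [heq]
  exact Submodule.sub_mem _ (Submodule.add_mem _ ha2prev (Submodule.sum_mem _ h2))
    (Submodule.sum_mem _ h1)

end KeelBasis

namespace KeelBasis

variable {n : ℕ} {x y z : Fin n}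

lemma dmk_pair_comm (a b : Fin n) (hg : 2 ≤ ({a, b} : Finset (Fin n)).card ∧
      ({a, b} : Finset (Fin n)).card ≤ n - 2)
    (hg' : 2 ≤ ({b, a} : Finset (Fin n)).card ∧ ({b, a} : Finset (Fin n)).card ≤ n - 2) :
    dmk n ⟨{a, b}, hg⟩ = dmk n ⟨{b, a}, hg'⟩ :=
  congrArg (dmk n) (Subtype.ext (Finset.pair_comm a b))

variable (hn : 4 ≤ n) (hxy : x ≠ y) (hxz : x ≠ z) (hyz : y ≠ z)

include hn hxy hxz hyz in
lemma pair_y_mem (q : Fin n) (hqy : q ≠ y) (hxq : x ≠ q) :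
    dmk n ⟨{q, y}, pair_good q y hn hqy⟩ ∈ Mspan n x y z := by
  by_cases hqz : q = z
  · subst hqz
    rw [dmk_pair_comm q y _ (pair_good y q hn hyz)]
    exact yz_mem_M (pair_good y q hn hyz)
  · exact step_M hn q y z hqy hqz hyz hxq hxy hxz
      (yz_mem_M (pair_good y z hn hyz))

include hn hxy hxz hyz in
lemma pair_mem_M (p q : Fin n) (hpq : p ≠ q) (hxp : x ≠ p) (hxq : x ≠ q)
    (hg : 2 ≤ ({p, q} : Finset (Fin n)).card ∧ ({p, q} : Finset (Fin n)).card ≤ n - 2) :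
    dmk n ⟨{p, q}, hg⟩ ∈ Mspan n x y z := by
  by_cases hqy : q = y
  · subst hqy
    exact pair_y_mem hn hxy hxz hyz p hpq hxp
  · by_cases hpy : p = y
    · subst hpy
      rw [dmk_pair_comm p q _ (pair_good q p hn hqy)]
      exact pair_y_mem hn hxy hxz hyz q hqy hxq
    · exact step_M hn p q y hpq hpy hqy hxp hxq hxy
        (pair_y_mem hn hxy hxz hyz q hqy hxq)

include hn hxy hxz hyz in
lemma xmem_mem_M (A : GoodSet n) (hx : x ∈ A.1) : dmk n A ∈ Mspan n x y z := by
  have hcardn : A.1.card ≤ n := A.1.card_le_univ.trans (by simp)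
  by_cases hc : A.1.card ≤ n - 3
  · exact cand_mem_M A.1 ⟨hx, A.2.1, hc⟩ A.2
  · have hA2 : A.1.card = n - 2 := by have := A.2.2; omega
    have hcompl : 2 ≤ (A.1ᶜ).card ∧ (A.1ᶜ).card ≤ n - 2 := by
      rw [card_compl' n]; omega
    rw [dmk_compl A hcompl]
    have hcc : (A.1ᶜ).card = 2 := by rw [card_compl' n]; omega
    obtain ⟨p, q, hpq, hA⟩ := Finset.card_eq_two.mp hcc
    have hxp : x ≠ p := by
      intro h; subst h
      exact (Finset.mem_compl.mp (hA ▸ (by simp : x ∈ ({x, q} : Finset (Fin n))))) hx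
    have hxq : x ≠ q := by
      intro h; subst h
      exact (Finset.mem_compl.mp (hA ▸ (by simp : x ∈ ({p, x} : Finset (Fin n))))) hx
    have : (⟨A.1ᶜ, hcompl⟩ : GoodSet n) = ⟨{p, q}, hA ▸ hcompl⟩ := Subtype.ext hA
    rw [this]
    exact pair_mem_M hn hxy hxz hyz p q hpq hxp hxq _

include hn hxy hxz hyz in
lemma good_mem_M (A : GoodSet n) : dmk n A ∈ Mspan n x y z := by
  by_cases hx : x ∈ A.1
  · exact xmem_mem_M hn hxy hxz hyz A hx
  · have hcardn : A.1.card ≤ n := A.1.card_le_univ.trans (by simp)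
    have hcompl : 2 ≤ (A.1ᶜ).card ∧ (A.1ᶜ).card ≤ n - 2 := by
      rw [card_compl' n]; have := A.2.1; have := A.2.2; omega
    rw [dmk_compl A hcompl]
    exact xmem_mem_M hn hxy hxz hyz ⟨A.1ᶜ, hcompl⟩ (Finset.mem_compl.mpr hx)

include hn hxy hxz hyz in
lemma span_vclass_top : Mspan n x y z = ⊤ := by
  rw [eq_top_iff]
  rintro v -
  obtain ⟨w, rfl⟩ := Submodule.Quotient.mk_surjective _ v
  induction w using Finsupp.induction_linear with
  | zero => simp
  | add f g hf hg =>
      rw [← Submodule.mkQ_apply, map_add]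
      exact Submodule.add_mem _ (by simpa using hf) (by simpa using hg)
  | single a b =>
      have h1 : Finsupp.single a b = b • Finsupp.single a (1:ℚ) := by
        rw [Finsupp.smul_single', mul_one]
      rw [h1, ← Submodule.mkQ_apply, map_smul]
      exact Submodule.smul_mem _ b
        (by simpa [dmk] using good_mem_M hn hxy hxz hyz a)

end KeelBasis

open KeelBasis

/-- Lemma (4.2): for `n ≥ 4` and distinct `x, y, z ∈ Q = {1,…,n}`, the class `δ_{{y,z}}`
together with the classes `δ_S` for `x ∈ S`, `2 ≤ |S| ≤ n-3`, form a basis of `Vₙ`. -/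
theorem canonical_basis (n : ℕ) (hn : 4 ≤ n) (x y z : Fin n)
    (hxy : x ≠ y) (hxz : x ≠ z) (hyz : y ≠ z) :
    ∃ b : Module.Basis (Option {S : Finset (Fin n) // x ∈ S ∧ 2 ≤ S.card ∧ S.card ≤ n - 3})
        ℚ (Vn n),
      b none = deltaV n {y, z} ∧
      ∀ S : {S : Finset (Fin n) // x ∈ S ∧ 2 ≤ S.card ∧ S.card ≤ n - 3},
        b (some S) = deltaV n S.1 := by
  classical
  set T : (Option (Idx n x) →₀ ℚ) →ₗ[ℚ] Vn n :=
    Finsupp.linearCombination ℚ (vclass n x y z) with hTdef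
  have hker : Submodule.span ℚ (keelRelations n) ≤ LinearMap.ker (fmap n x y z) :=
    Submodule.span_le.mpr (fun w hw => LinearMap.mem_ker.mpr (fmap_rel hn w hw))
  set fbar : Vn n →ₗ[ℚ] (Option (Idx n x) →₀ ℚ) :=
    Submodule.liftQ _ (fmap n x y z) hker with hfbardef
  have hyzgood := pair_good y z hn hyz
  have hvT : ∀ i, T (Finsupp.single i 1) = vclass n x y z i := fun i => by
    rw [hTdef, Finsupp.linearCombination_single, one_smul]
  have hfbar_mk : ∀ w : Wn n, fbar (Submodule.Quotient.mk w) = fmap n x y z w :=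
    fun w => Submodule.liftQ_apply _ _ w
  have hfv : ∀ i, fbar (vclass n x y z i) = Finsupp.single i 1 := by
    intro i
    cases i with
    | none =>
        show fbar (deltaV n {y, z}) = _
        rw [deltaV_eq_dmk _ hyzgood, dmk, hfbar_mk, fmap_single,
          vfun_eval _ none (fun i => ell_yz hn hxy hxz hyz i)]
    | some S =>
        have hSgood : 2 ≤ S.1.card ∧ S.1.card ≤ n - 2 := ⟨S.2.2.1, by
          have := S.2.2.2; omega⟩
        show fbar (deltaV n S.1) = _
        rw [deltaV_eq_dmk _ hSgood, dmk, hfbar_mk, fmap_single,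
          vfun_eval _ (some S) (fun i => ell_cand hn S i)]
  have hcomp : fbar.comp T = LinearMap.id := by
    refine Finsupp.lhom_ext (fun i b => ?_)
    have hb : (Finsupp.single i b : Option (Idx n x) →₀ ℚ) = b • Finsupp.single i 1 := by
      rw [Finsupp.smul_single', mul_one]
    rw [LinearMap.id_apply, hb, LinearMap.comp_apply, map_smul, hvT, map_smul, hfv]
  have hleft : ∀ u, fbar (T u) = u := fun u => by
    rw [← LinearMap.comp_apply, hcomp, LinearMap.id_apply]
  have hinj : Function.Injective T := fun u v huv => by
    rw [← hleft u, ← hleft v, huv]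
  have hsurj : Function.Surjective T := by
    rw [← LinearMap.range_eq_top, hTdef, Finsupp.range_linearCombination]
    exact span_vclass_top hn hxy hxz hyz
  set e := LinearEquiv.ofBijective T ⟨hinj, hsurj⟩ with hedef
  have hb : ∀ i, (Module.Basis.ofRepr e.symm) i = vclass n x y z i := by
    intro i
    rw [← Module.Basis.repr_symm_single_one]
    show e.symm.symm (Finsupp.single i 1) = _
    rw [LinearEquiv.symm_symm, hedef]
    exact hvT i
  exact ⟨Module.Basis.ofRepr e.symm, hb none, fun S => hb (some S)⟩
end

section
/- Let n ≥ 2 be an integer and consider the space V_{n+2} built on the ground set Q = {1,…,n+2}. Then the classes δ_{S ∪ {n+1, n+2}}, where S runs through all subsets of {1,…,n} with |S| ≤ n−2, are linearly independent in V_{n+2}. -/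
section Aux
variable {m : ℕ} (c : Fin m → Fin 4)

def satur (A : Finset (Fin m)) : Prop := ∀ i j, c i = c j → (i ∈ A ↔ j ∈ A)

instance (A : Finset (Fin m)) : Decidable (satur c A) := by unfold satur; infer_instance

noncomputable def wt (A : Finset (Fin m)) : ℚ :=
  if satur c A then (-1) ^ (A.image c).card else 0

lemma mem_iff_of_satur {A : Finset (Fin m)} (hA : satur c A) (i : Fin m) :
    i ∈ A ↔ c i ∈ A.image c := by
  constructor
  · exact fun h => Finset.mem_image_of_mem _ h
  · intro h
    obtain ⟨j, hj, hji⟩ := Finset.mem_image.mp h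
    exact (hA j i hji).mp hj

lemma satur_compl {A : Finset (Fin m)} : satur c Aᶜ ↔ satur c A := by
  unfold satur
  simp only [Finset.mem_compl]
  constructor <;> intro h i j hij <;> have := h i j hij <;> tauto

lemma image_compl (hc : Function.Surjective c) {A : Finset (Fin m)} (hA : satur c A) :
    Aᶜ.image c = (A.image c)ᶜ := by
  ext x
  rw [Finset.mem_compl]
  constructor
  · intro hx hx2
    obtain ⟨i, hi, rfl⟩ := Finset.mem_image.mp hx
    exact (Finset.mem_compl.mp hi) ((mem_iff_of_satur c hA i).mpr hx2)
  · intro hx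
    obtain ⟨i, rfl⟩ := hc x
    exact Finset.mem_image_of_mem c (Finset.mem_compl.mpr
      (fun h => hx (Finset.mem_image_of_mem c h)))

lemma wt_compl (hc : Function.Surjective c) (A : Finset (Fin m)) :
    wt c Aᶜ = wt c A := by
  unfold wt
  by_cases hA : satur c A
  · rw [if_pos ((satur_compl c).mpr hA), if_pos hA, image_compl c hc hA, Finset.card_compl]
    have hk : (A.image c).card ≤ 4 := le_trans (Finset.card_le_univ _) (by simp)
    have h4 : (Fintype.card (Fin 4)) = 4 := by simp
    rw [h4]
    have : ((-1 : ℚ)) ^ (4 - (A.image c).card) * ((-1) ^ (A.image c).card * (-1) ^ (A.image c).card) = (-1:ℚ) ^ (4 - (A.image c).card) * 1 := by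
      rw [← mul_pow]; norm_num
    calc ((-1:ℚ)) ^ (4 - (A.image c).card)
        = (-1:ℚ) ^ (4 - (A.image c).card) * ((-1) ^ (A.image c).card * (-1) ^ (A.image c).card) := by rw [this, mul_one]
      _ = ((-1:ℚ) ^ ((4 - (A.image c).card) + (A.image c).card)) * (-1) ^ (A.image c).card := by rw [pow_add]; ring
      _ = (-1:ℚ) ^ (A.image c).card := by rw [Nat.sub_add_cancel hk]; norm_num
  · rw [if_neg (fun h => hA ((satur_compl c).mp h)), if_neg hA]

lemma int_eval : ∀ a b c d : Fin 4,
    (∑ V ∈ Finset.univ.filter (fun V : Finset (Fin 4) => a ∈ V ∧ b ∈ V ∧ c ∉ V ∧ d ∉ V),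
      (-1 : ℤ) ^ V.card) = if ({a, b, c, d} : Finset (Fin 4)).card = 4 then 1 else 0 := by
  decide

lemma quad_sum (hc : Function.Surjective c) {p q r s : Fin m} (hpq : p ≠ q) (hrs : r ≠ s) :
    ∑ A ∈ Finset.univ.filter
        (fun A : GoodSet m => p ∈ A.1 ∧ q ∈ A.1 ∧ r ∉ A.1 ∧ s ∉ A.1), wt c A.1
      = if ({c p, c q, c r, c s} : Finset (Fin 4)).card = 4 then 1 else 0 := by
  rw [← Finset.sum_filter_of_ne (p := fun A : GoodSet m => satur c A.1)
      (fun A _ hA => by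
        by_contra h
        exact hA (if_neg h))]
  rw [Finset.sum_bij (i := fun (A : GoodSet m)
        (_ : A ∈ (Finset.univ.filter
          (fun A : GoodSet m => p ∈ A.1 ∧ q ∈ A.1 ∧ r ∉ A.1 ∧ s ∉ A.1)).filter
          (fun A => satur c A.1)) => A.1.image c)
      (t := Finset.univ.filter
        (fun V : Finset (Fin 4) => c p ∈ V ∧ c q ∈ V ∧ c r ∉ V ∧ c s ∉ V))
      (g := fun V => (-1 : ℚ) ^ V.card) ?hi ?inj ?surj ?heq]
  · -- evaluate the V-sum via ℤ
    have hcast : (∑ V ∈ Finset.univ.filter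
        (fun V : Finset (Fin 4) => c p ∈ V ∧ c q ∈ V ∧ c r ∉ V ∧ c s ∉ V),
        (-1 : ℚ) ^ V.card)
        = ((∑ V ∈ Finset.univ.filter
        (fun V : Finset (Fin 4) => c p ∈ V ∧ c q ∈ V ∧ c r ∉ V ∧ c s ∉ V),
        (-1 : ℤ) ^ V.card : ℤ) : ℚ) := by
      push_cast
      rfl
    rw [hcast, int_eval]
    split_ifs <;> norm_num
  case hi =>
    intro A hA
    simp only [Finset.mem_filter, Finset.mem_univ, true_and] at hA ⊢
    obtain ⟨⟨hp, hq, hr, hs⟩, hsat⟩ := hA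
    refine ⟨Finset.mem_image_of_mem _ hp, Finset.mem_image_of_mem _ hq, ?_, ?_⟩
    · exact fun h => hr ((mem_iff_of_satur c hsat r).mpr h)
    · exact fun h => hs ((mem_iff_of_satur c hsat s).mpr h)
  case inj =>
    intro A hA B hB h
    simp only [Finset.mem_filter, Finset.mem_univ, true_and] at hA hB
    apply Subtype.ext
    ext i
    rw [mem_iff_of_satur c hA.2 i, mem_iff_of_satur c hB.2 i, h]
  case surj =>
    intro V hV
    simp only [Finset.mem_filter, Finset.mem_univ, true_and] at hV
    obtain ⟨hp, hq, hr, hs⟩ := hV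
    have hmem : ∀ i : Fin m, i ∈ Finset.univ.filter (fun x => c x ∈ V) ↔ c i ∈ V := by
      intro i; simp
    have hgood : 2 ≤ (Finset.univ.filter (fun x : Fin m => c x ∈ V)).card ∧
        (Finset.univ.filter (fun x : Fin m => c x ∈ V)).card ≤ m - 2 := by
      constructor
      · have : ({p, q} : Finset (Fin m)) ⊆ Finset.univ.filter (fun x => c x ∈ V) := by
          intro i hi
          rcases Finset.mem_insert.mp hi with h | h
          · subst h; exact (hmem i).mpr hp
          · rw [Finset.mem_singleton] at h; subst h; exact (hmem i).mpr hq
        calc 2 = ({p, q} : Finset (Fin m)).card := (Finset.card_pair hpq).symm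
          _ ≤ _ := Finset.card_le_card this
      · have : Finset.univ.filter (fun x : Fin m => c x ∈ V) ⊆ ({r, s} : Finset (Fin m))ᶜ := by
          intro i hi
          rw [Finset.mem_compl, Finset.mem_insert, Finset.mem_singleton]
          rintro (rfl | rfl)
          · exact hr ((hmem i).mp hi)
          · exact hs ((hmem i).mp hi)
        calc (Finset.univ.filter (fun x : Fin m => c x ∈ V)).card
            ≤ (({r, s} : Finset (Fin m))ᶜ).card := Finset.card_le_card this
          _ = Fintype.card (Fin m) - ({r, s} : Finset (Fin m)).card := Finset.card_compl _
          _ = m - 2 := by rw [Fintype.card_fin, Finset.card_pair hrs]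
    refine ⟨⟨Finset.univ.filter (fun x => c x ∈ V), hgood⟩, ?_, ?_⟩
    · simp only [Finset.mem_filter, Finset.mem_univ, true_and]
      refine ⟨⟨hp, hq, hr, hs⟩, ?_⟩
      intro i j hij
      rw [hmem, hmem, hij]
    · apply Finset.Subset.antisymm
      · intro x hx
        obtain ⟨i, hi, rfl⟩ := Finset.mem_image.mp hx
        exact (hmem i).mp hi
      · intro x hx
        obtain ⟨i, rfl⟩ := hc x
        exact Finset.mem_image_of_mem c ((hmem i).mpr hx)
  case heq =>
    intro A hA
    simp only [Finset.mem_filter] at hA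
    exact if_pos hA.2

end Aux


noncomputable def phi {m : ℕ} (c : Fin m → Fin 4) : Wn m →ₗ[ℚ] ℚ :=
  Finsupp.linearCombination ℚ (fun A : GoodSet m => wt c A.1)

lemma phi_single {m : ℕ} (c : Fin m → Fin 4) (A : GoodSet m) :
    phi c (Finsupp.single A 1) = wt c A.1 := by
  simp [phi]

lemma keel_ker {m : ℕ} (c : Fin m → Fin 4) (hc : Function.Surjective c) :
    keelRelations m ⊆ (LinearMap.ker (phi c) : Set (Wn m)) := by
  rintro w (⟨A, B, hB, rfl⟩ | ⟨p, q, r, s, hpq, hpr, hps, hqr, hqs, hrs, rfl⟩)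
  · rw [SetLike.mem_coe, LinearMap.mem_ker, map_sub, phi_single, phi_single, hB,
      wt_compl c hc, sub_self]
  · rw [SetLike.mem_coe, LinearMap.mem_ker, map_sub, map_sum, map_sum]
    simp only [phi_single]
    rw [quad_sum c hc hpq hrs, quad_sum c hc hpr hqs,
      Finset.insert_comm (c q) (c r), sub_self]

lemma omega_card (n : ℕ) :
    (Finset.univ.filter (fun i : Fin (n + 2) => (i : ℕ) < n)).card = n := by
  have h := Finset.card_filter_add_card_filter_not
    (s := (Finset.univ : Finset (Fin (n + 2)))) (p := fun i : Fin (n + 2) => (i : ℕ) < n)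
  have h2 : Finset.univ.filter (fun i : Fin (n + 2) => ¬ (i : ℕ) < n)
      = {(⟨n, by omega⟩ : Fin (n + 2)), ⟨n + 1, by omega⟩} := by
    ext i
    simp only [Finset.mem_filter, Finset.mem_univ, true_and, Finset.mem_insert,
      Finset.mem_singleton, Fin.ext_iff]
    have := i.isLt
    omega
  rw [h2] at h
  have h3 : ({(⟨n, by omega⟩ : Fin (n + 2)), ⟨n + 1, by omega⟩} :
      Finset (Fin (n + 2))).card = 2 := by
    rw [Finset.card_pair]
    simp [Fin.ext_iff]
  rw [h3, Finset.card_univ, Fintype.card_fin] at h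
  omega

section Colr
variable {n : ℕ} (T : Finset (Fin (n + 2))) (z : Fin (n + 2))

/-- The 4-coloring of `{1,…,n+2}` with colors `{a}↦0`, `{b}∪T↦1`, `{z}↦2`, rest `↦3`. -/
def colr : Fin (n + 2) → Fin 4 := fun i =>
  if (i : ℕ) = n then 0 else if (i : ℕ) = n + 1 ∨ i ∈ T then 1 else if i = z then 2 else 3

lemma colr_eq_zero (i : Fin (n + 2)) : colr T z i = 0 ↔ (i : ℕ) = n := by
  unfold colr; split_ifs with h1 h2 h3
  · exact iff_of_true rfl h1
  · exact iff_of_false (by decide) h1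
  · exact iff_of_false (by decide) h1
  · exact iff_of_false (by decide) h1

lemma colr_eq_one (hT : ∀ i ∈ T, (i : ℕ) < n) (i : Fin (n + 2)) :
    colr T z i = 1 ↔ ((i : ℕ) = n + 1 ∨ i ∈ T) := by
  unfold colr; split_ifs with h1 h2 h3
  · refine iff_of_false (by decide) ?_
    rintro (h | h)
    · omega
    · have := hT i h; omega
  · exact iff_of_true rfl h2
  · exact iff_of_false (by decide) h2
  · exact iff_of_false (by decide) h2

lemma colr_eq_two (hzn : (z : ℕ) < n) (hzT : z ∉ T) (i : Fin (n + 2)) :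
    colr T z i = 2 ↔ i = z := by
  unfold colr; split_ifs with h1 h2 h3
  · exact iff_of_false (by decide) (fun h => by subst h; omega)
  · refine iff_of_false (by decide) (fun h => ?_)
    subst h
    rcases h2 with h | h
    · omega
    · exact hzT h
  · exact iff_of_true rfl h3
  · exact iff_of_false (by decide) h3

lemma colr_eq_three (i : Fin (n + 2)) :
    colr T z i = 3 ↔ ((i : ℕ) ≠ n ∧ (i : ℕ) ≠ n + 1 ∧ i ∉ T ∧ i ≠ z) := by
  unfold colr; split_ifs with h1 h2 h3
  · exact iff_of_false (by decide) (fun h => h.1 h1)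
  · refine iff_of_false (by decide) (fun h => ?_)
    rcases h2 with h2 | h2
    · exact h.2.1 h2
    · exact h.2.2.1 h2
  · exact iff_of_false (by decide) (fun h => h.2.2.2 h3)
  · refine iff_of_true rfl ⟨h1, ?_, ?_, h3⟩
    · intro h; exact h2 (Or.inl h)
    · intro h; exact h2 (Or.inr h)

lemma colr_surj (hT : ∀ i ∈ T, (i : ℕ) < n) (hzn : (z : ℕ) < n) (hzT : z ∉ T)
    (y : Fin (n + 2)) (hyn : (y : ℕ) < n) (hyT : y ∉ T) (hyz : y ≠ z) :
    Function.Surjective (colr T z) := by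
  intro v
  have h4 : v = 0 ∨ v = 1 ∨ v = 2 ∨ v = 3 := by fin_cases v <;> simp
  rcases h4 with rfl | rfl | rfl | rfl
  · exact ⟨⟨n, by omega⟩, (colr_eq_zero T z _).mpr rfl⟩
  · exact ⟨⟨n + 1, by omega⟩, (colr_eq_one T z hT _).mpr (Or.inl rfl)⟩
  · exact ⟨z, (colr_eq_two T z hzn hzT _).mpr rfl⟩
  · exact ⟨y, (colr_eq_three T z _).mpr ⟨by omega, by omega, hyT, hyz⟩⟩

lemma wt_colr (hn : 2 ≤ n) (S : Finset (Fin (n + 2)))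
    (hT : ∀ i ∈ T, (i : ℕ) < n) (hTc : T.card ≤ n - 2)
    (hS : ∀ i ∈ S, (i : ℕ) < n) (hSc : S.card ≤ n - 2)
    (hzn : (z : ℕ) < n) (hzT : z ∉ T)
    (a b : Fin (n + 2)) (han : (a : ℕ) = n) (hbn : (b : ℕ) = n + 1) :
    wt (colr T z) (S ∪ {a, b})
      = (if S = T then 1 else 0) - (if S = T ∪ {z} then 1 else 0) := by
  have hzT' : T ≠ T ∪ {z} := by
    intro h
    have : z ∈ T ∪ {z} := Finset.mem_union_right _ (Finset.mem_singleton_self z)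
    rw [← h] at this
    exact hzT this
  by_cases h1 : S = T
  · subst h1
    have hiff : ∀ i : Fin (n + 2), i ∈ S ∪ {a, b} ↔ (colr S z i = 0 ∨ colr S z i = 1) := by
      intro i
      rw [colr_eq_zero, colr_eq_one S z hS]
      simp only [Finset.mem_union, Finset.mem_insert, Finset.mem_singleton, Fin.ext_iff, han, hbn]
      tauto
    have hsat : satur (colr S z) (S ∪ {a, b}) := by
      intro i j hij
      rw [hiff i, hiff j, hij]
    have himg : (S ∪ {a, b}).image (colr S z) = {0, 1} := by
      apply Finset.Subset.antisymm
      · intro x hx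
        obtain ⟨i, hi, rfl⟩ := Finset.mem_image.mp hx
        have := (hiff i).mp hi
        simp only [Finset.mem_insert, Finset.mem_singleton]
        exact this
      · intro x hx
        rcases Finset.mem_insert.mp hx with rfl | hx
        · exact Finset.mem_image.mpr ⟨a, Finset.mem_union_right _ (Finset.mem_insert_self a _),
            (colr_eq_zero S z a).mpr han⟩
        · rw [Finset.mem_singleton] at hx
          subst hx
          exact Finset.mem_image.mpr ⟨b, Finset.mem_union_right _
            (Finset.mem_insert_of_mem (Finset.mem_singleton_self b)),
            (colr_eq_one S z hS b).mpr (Or.inl hbn)⟩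
    rw [wt, if_pos hsat, himg, if_pos rfl, if_neg hzT']
    have h3 : ({0, 1} : Finset (Fin 4)).card = 2 := by decide
    rw [h3]
    norm_num
  · by_cases h2 : S = T ∪ {z}
    · subst h2
      have hiff : ∀ i : Fin (n + 2), i ∈ (T ∪ {z}) ∪ {a, b} ↔
          (colr T z i = 0 ∨ colr T z i = 1 ∨ colr T z i = 2) := by
        intro i
        rw [colr_eq_zero, colr_eq_one T z hT, colr_eq_two T z hzn hzT]
        simp only [Finset.mem_union, Finset.mem_insert, Finset.mem_singleton, Fin.ext_iff,
          han, hbn]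
        tauto
      have hsat : satur (colr T z) ((T ∪ {z}) ∪ {a, b}) := by
        intro i j hij
        rw [hiff i, hiff j, hij]
      have himg : ((T ∪ {z}) ∪ {a, b}).image (colr T z) = {0, 1, 2} := by
        apply Finset.Subset.antisymm
        · intro x hx
          obtain ⟨i, hi, rfl⟩ := Finset.mem_image.mp hx
          have := (hiff i).mp hi
          simp only [Finset.mem_insert, Finset.mem_singleton]
          exact this
        · intro x hx
          rcases Finset.mem_insert.mp hx with rfl | hx
          · exact Finset.mem_image.mpr ⟨a, Finset.mem_union_right _ (Finset.mem_insert_self a _),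
              (colr_eq_zero T z a).mpr han⟩
          rcases Finset.mem_insert.mp hx with rfl | hx
          · exact Finset.mem_image.mpr ⟨b, Finset.mem_union_right _
              (Finset.mem_insert_of_mem (Finset.mem_singleton_self b)),
              (colr_eq_one T z hT b).mpr (Or.inl hbn)⟩
          · rw [Finset.mem_singleton] at hx
            subst hx
            exact Finset.mem_image.mpr ⟨z, Finset.mem_union_left _
              (Finset.mem_union_right _ (Finset.mem_singleton_self z)),
              (colr_eq_two T z hzn hzT z).mpr rfl⟩
      rw [wt, if_pos hsat, himg, if_neg (fun h => hzT' h.symm), if_pos rfl]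
      have h3 : ({0, 1, 2} : Finset (Fin 4)).card = 3 := by decide
      rw [h3]
      norm_num
    · rw [wt, if_neg, if_neg h1, if_neg h2, sub_zero]
      intro hsat
      have hTS : T ⊆ S := by
        intro t ht
        have e1 : colr T z b = 1 := (colr_eq_one T z hT b).mpr (Or.inl hbn)
        have e2 : colr T z t = 1 := (colr_eq_one T z hT t).mpr (Or.inr ht)
        have hbA : b ∈ S ∪ {a, b} := Finset.mem_union_right _
          (Finset.mem_insert_of_mem (Finset.mem_singleton_self b))
        have := (hsat b t (e1.trans e2.symm)).mp hbA
        rcases Finset.mem_union.mp this with h | h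
        · exact h
        · exfalso
          have hvt := hT t ht
          rcases Finset.mem_insert.mp h with rfl | h
          · omega
          · rw [Finset.mem_singleton] at h; subst h; omega
      have hSz : S ⊆ T ∪ {z} := by
        intro x hx
        have hxn := hS x hx
        have h4 : ∀ v : Fin 4, v = 0 ∨ v = 1 ∨ v = 2 ∨ v = 3 := by decide
        rcases h4 (colr T z x) with h | h | h | h
        · rw [colr_eq_zero] at h; omega
        · rw [colr_eq_one T z hT] at h
          rcases h with h | h
          · omega
          · exact Finset.mem_union_left _ h
        · rw [colr_eq_two T z hzn hzT] at h
          subst h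
          exact Finset.mem_union_right _ (Finset.mem_singleton_self _)
        · exfalso
          have hbig : ∀ w : Fin (n + 2), (w : ℕ) < n → w ∉ T → w ≠ z → w ∈ S := by
            intro w hwn hwT hwz
            have hw3 : colr T z w = 3 := (colr_eq_three T z w).mpr
              ⟨by omega, by omega, hwT, hwz⟩
            have := (hsat x w (h.trans hw3.symm)).mp (Finset.mem_union_left _ hx)
            rcases Finset.mem_union.mp this with hw | hw
            · exact hw
            · exfalso
              rcases Finset.mem_insert.mp hw with rfl | hw
              · omega
              · rw [Finset.mem_singleton] at hw; subst hw; omega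
          have hΩ : (Finset.univ.filter (fun i : Fin (n + 2) => (i : ℕ) < n)) \ {z} ⊆ S := by
            intro w hw
            rw [Finset.mem_sdiff, Finset.mem_filter, Finset.mem_singleton] at hw
            obtain ⟨⟨_, hwn⟩, hwz⟩ := hw
            by_cases hwT : w ∈ T
            · exact hTS hwT
            · exact hbig w hwn hwT hwz
          have hz' : z ∈ Finset.univ.filter (fun i : Fin (n + 2) => (i : ℕ) < n) :=
            Finset.mem_filter.mpr ⟨Finset.mem_univ _, hzn⟩
          have hc1 : ((Finset.univ.filter (fun i : Fin (n + 2) => (i : ℕ) < n)) \ {z}).card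
              = (Finset.univ.filter (fun i : Fin (n + 2) => (i : ℕ) < n)).card - 1 := by
            rw [Finset.card_sdiff_of_subset (Finset.singleton_subset_iff.mpr hz'), Finset.card_singleton]
          have hc2 := omega_card n
          have hc3 := Finset.card_le_card hΩ
          rw [hc1, hc2] at hc3
          omega
      by_cases hzS : z ∈ S
      · refine h2 (Finset.Subset.antisymm hSz ?_)
        intro w hw
        rcases Finset.mem_union.mp hw with h | h
        · exact hTS h
        · rw [Finset.mem_singleton] at h; subst h; exact hzS
      · refine h1 (Finset.Subset.antisymm ?_ hTS)
        intro x hx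
        rcases Finset.mem_union.mp (hSz hx) with h | h
        · exact h
        · rw [Finset.mem_singleton] at h; subst h; exact absurd hx hzS

end Colr

/-- Lemma (1.15): for `n ≥ 2`, in `V_{n+2}` (ground set `{1,…,n+2}`), the classes
`δ_{S ∪ {n+1, n+2}}`, for `S` running through the subsets of `{1,…,n}` with
`|S| ≤ n-2`, are linearly independent. -/
theorem delta_linearIndependent (n : ℕ) (hn : 2 ≤ n) :
    LinearIndependent ℚ
      (fun S : {S : Finset (Fin (n + 2)) // (∀ i ∈ S, (i : ℕ) < n) ∧ S.card ≤ n - 2} =>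
        deltaV (n + 2)
          (S.1 ∪ {(⟨n, by omega⟩ : Fin (n + 2)), (⟨n + 1, by omega⟩ : Fin (n + 2))})) := by
  classical
  rw [linearIndependent_iff]
  intro l hl
  have key : ∀ (k : ℕ)
      (T : {S : Finset (Fin (n + 2)) // (∀ i ∈ S, (i : ℕ) < n) ∧ S.card ≤ n - 2}),
      n - T.1.card ≤ k → l T = 0 := by
    intro k
    induction k with
    | zero =>
      intro T hT
      exfalso
      have h2 := T.2.2
      omega
    | succ k ih =>
      intro T hT
      obtain ⟨hTn, hTc⟩ := T.2
      have hΩc := omega_card n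
      have hsub : T.1 ⊆ Finset.univ.filter (fun i : Fin (n + 2) => (i : ℕ) < n) :=
        fun i hi => Finset.mem_filter.mpr ⟨Finset.mem_univ _, hTn i hi⟩
      have hlt : 1 < ((Finset.univ.filter (fun i : Fin (n + 2) => (i : ℕ) < n)) \ T.1).card := by
        rw [Finset.card_sdiff_of_subset hsub, hΩc]
        omega
      obtain ⟨z, hz, y, hy, hyz⟩ := Finset.one_lt_card.mp hlt
      rw [Finset.mem_sdiff, Finset.mem_filter] at hz hy
      obtain ⟨⟨_, hzn⟩, hzT⟩ := hz
      obtain ⟨⟨_, hyn⟩, hyT⟩ := hy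
      have hsurj : Function.Surjective (colr T.1 z) :=
        colr_surj T.1 z hTn hzn hzT y hyn hyT hyz.symm
      have hker : Submodule.span ℚ (keelRelations (n + 2))
          ≤ LinearMap.ker (phi (colr T.1 z)) :=
        Submodule.span_le.mpr (keel_ker _ hsurj)
      set ψ := Submodule.liftQ _ (phi (colr T.1 z)) hker with hψdef
      have h0 := congrArg ψ hl
      rw [map_zero, Finsupp.linearCombination_apply, Finsupp.sum, map_sum] at h0
      have h1 : ∀ S ∈ l.support, ψ (l S • deltaV (n + 2)
          (S.1 ∪ {(⟨n, by omega⟩ : Fin (n + 2)), (⟨n + 1, by omega⟩ : Fin (n + 2))}))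
          = l S * (if S.1 = T.1 then 1 else 0) - l S * (if S.1 = T.1 ∪ {z} then 1 else 0) := by
        intro S _
        have hdisj : Disjoint S.1
            ({(⟨n, by omega⟩ : Fin (n + 2)), (⟨n + 1, by omega⟩ : Fin (n + 2))} :
              Finset (Fin (n + 2))) := by
          rw [Finset.disjoint_left]
          intro i hi hmem
          have hvi := S.2.1 i hi
          rcases Finset.mem_insert.mp hmem with rfl | h
          · simp at hvi
          · rw [Finset.mem_singleton] at h
            subst h
            simp at hvi
        have hcard2 : ({(⟨n, by omega⟩ : Fin (n + 2)), (⟨n + 1, by omega⟩ : Fin (n + 2))} :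
            Finset (Fin (n + 2))).card = 2 := by
          rw [Finset.card_pair]
          simp [Fin.ext_iff]
        have hSc := S.2.2
        have hgood : 2 ≤ (S.1 ∪ {(⟨n, by omega⟩ : Fin (n + 2)),
              (⟨n + 1, by omega⟩ : Fin (n + 2))}).card ∧
            (S.1 ∪ {(⟨n, by omega⟩ : Fin (n + 2)),
              (⟨n + 1, by omega⟩ : Fin (n + 2))}).card ≤ (n + 2) - 2 := by
          rw [Finset.card_union_of_disjoint hdisj, hcard2]
          omega
        rw [map_smul, smul_eq_mul, deltaV, dif_pos hgood, hψdef, Submodule.liftQ_apply,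
          phi_single, wt_colr T.1 z hn S.1 hTn hTc S.2.1 hSc hzn hzT _ _ rfl rfl]
        ring
      rw [Finset.sum_congr rfl h1, Finset.sum_sub_distrib] at h0
      have e1 : ∑ S ∈ l.support, l S * (if S.1 = T.1 then (1 : ℚ) else 0) = l T := by
        have hterm : ∀ S ∈ l.support, l S * (if S.1 = T.1 then (1 : ℚ) else 0)
            = if S = T then l S else 0 := by
          intro S _
          by_cases h : S = T
          · rw [if_pos h, if_pos (by rw [h]), mul_one]
          · rw [if_neg h, if_neg (fun hh => h (Subtype.ext hh)), mul_zero]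
        rw [Finset.sum_congr rfl hterm, Finset.sum_ite_eq' l.support T (fun S => l S)]
        by_cases hT' : T ∈ l.support
        · rw [if_pos hT']
        · rw [if_neg hT', Finsupp.notMem_support_iff.mp hT']
      rw [e1] at h0
      have hzcard : (T.1 ∪ {z}).card = T.1.card + 1 := by
        rw [Finset.card_union_of_disjoint (Finset.disjoint_singleton_right.mpr hzT),
          Finset.card_singleton]
      by_cases hc2 : T.1.card + 1 ≤ n - 2
      · have hT'mem : (∀ i ∈ T.1 ∪ {z}, (i : ℕ) < n) ∧ (T.1 ∪ {z}).card ≤ n - 2 := by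
          constructor
          · intro i hi
            rcases Finset.mem_union.mp hi with h | h
            · exact hTn i h
            · rw [Finset.mem_singleton] at h
              subst h
              exact hzn
          · rw [hzcard]; exact hc2
        set T' : {S : Finset (Fin (n + 2)) // (∀ i ∈ S, (i : ℕ) < n) ∧ S.card ≤ n - 2} :=
          ⟨T.1 ∪ {z}, hT'mem⟩ with hT'def
        have e2 : ∑ S ∈ l.support, l S * (if S.1 = T.1 ∪ {z} then (1 : ℚ) else 0) = l T' := by
          have hterm : ∀ S ∈ l.support, l S * (if S.1 = T.1 ∪ {z} then (1 : ℚ) else 0)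
              = if S = T' then l S else 0 := by
            intro S _
            by_cases h : S = T'
            · rw [if_pos h, if_pos (by rw [h]), mul_one]
            · rw [if_neg h, if_neg (fun hh => h (Subtype.ext hh)), mul_zero]
          rw [Finset.sum_congr rfl hterm, Finset.sum_ite_eq' l.support T' (fun S => l S)]
          by_cases hT'' : T' ∈ l.support
          · rw [if_pos hT'']
          · rw [if_neg hT'', Finsupp.notMem_support_iff.mp hT'']
        rw [e2] at h0
        have hT'0 : l T' = 0 := by
          apply ih T'
          have : T'.1.card = T.1.card + 1 := hzcard
          omega
        rw [hT'0, sub_zero] at h0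
        exact h0
      · have e2 : ∑ S ∈ l.support, l S * (if S.1 = T.1 ∪ {z} then (1 : ℚ) else 0) = 0 := by
          apply Finset.sum_eq_zero
          intro S _
          rw [if_neg, mul_zero]
          intro hh
          have hcS : S.1.card = T.1.card + 1 := by rw [hh, hzcard]
          have := S.2.2
          omega
        rw [e2, sub_zero] at h0
        exact h0
  ext T
  have h2 := T.2.2
  simpa using key n T (by omega)
end

section
/- Let n ≥ 3 be an integer, and let a be an assignment of a rational number a_S to every subset S ⊆ {1,…,n} with |S| ≤ n−2. Suppose that (2−n)·a_∅ + Σ_{s=1}^{n} a_{{s}} = 0, and that for every nonempty subset S with |S| ≤ n−2 one has |S|·a_S = Σ_{s∈S} a_{S∖{s}}. Then a_S = 0 for every S. -/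
/-- The linear-algebra core of the proof of Lemma (1.15): let `n ≥ 3` and let
`a` assign a rational number `a_S` to every subset `S ⊆ {1,…,n}` with `|S| ≤ n-2`.
If `(2-n)·a_∅ + Σ_{s=1}^n a_{{s}} = 0` and, for every nonempty `S` with
`|S| ≤ n-2`, `|S|·a_S = Σ_{s∈S} a_{S∖{s}}`, then `a_S = 0` for every `S`. -/
theorem coefficients_vanish (n : ℕ) (hn : 3 ≤ n) (a : Finset (Fin n) → ℚ)
    (h1 : (2 - (n : ℚ)) * a ∅ + ∑ s : Fin n, a {s} = 0)
    (h2 : ∀ S : Finset (Fin n), S.Nonempty → S.card ≤ n - 2 →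
      (S.card : ℚ) * a S = ∑ s ∈ S, a (S.erase s)) :
    ∀ S : Finset (Fin n), S.card ≤ n - 2 → a S = 0 := by
  have key : ∀ k : ℕ, ∀ S : Finset (Fin n), S.card = k → S.card ≤ n - 2 → a S = a ∅ := by
    intro k
    induction k with
    | zero => intro S hS _; rw [Finset.card_eq_zero.mp hS]
    | succ k ih =>
        intro S hS hle
        have hne : S.Nonempty := Finset.card_pos.mp (by omega)
        have h := h2 S hne hle
        have hsum : ∑ s ∈ S, a (S.erase s) = (S.card : ℚ) * a ∅ := by
          rw [Finset.sum_congr rfl (fun s hs => ih (S.erase s)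
            (by rw [Finset.card_erase_of_mem hs, hS]; omega) (by
              have := Finset.card_erase_of_mem hs; omega))]
          simp [mul_comm]
        rw [hsum] at h
        have hcard : (S.card : ℚ) ≠ 0 := by
          have : 0 < S.card := Finset.card_pos.mpr hne
          exact_mod_cast this.ne'
        exact mul_left_cancel₀ hcard h
  have hsing : ∀ s : Fin n, a {s} = a ∅ := fun s =>
    key 1 {s} (Finset.card_singleton s) (by simp; omega)
  have h0 : a ∅ = 0 := by
    have : (2 - (n : ℚ)) * a ∅ + (n : ℚ) * a ∅ = 0 := by
      rw [← h1]; congr 1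
      rw [Finset.sum_congr rfl (fun s _ => hsing s)]
      simp [mul_comm]
    have h2a : (2 : ℚ) * a ∅ = 0 := by linarith
    linarith
  intro S hle
  rw [key S.card S rfl hle, h0]
end

section
/- Let n ≥ 5, let Q = {1,…,n}, fix x ∈ Q, and let W ⊆ V_n be the subspace spanned by the classes δ_S with x ∈ S and 2 ≤ |S| ≤ n−3. Then for any two 2-element subsets {a,b} and {c,d} of Q∖{x}, the classes δ_{{a,b}} and δ_{{c,d}} are congruent modulo W. -/
lemma deltaV_mk (n : ℕ) (A : GoodSet n) :
    deltaV n A.1 = Submodule.Quotient.mk (Finsupp.single A (1:ℚ)) := by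
  rw [deltaV, dif_pos A.2]

lemma deltaV_compl (n : ℕ) (hn : 4 ≤ n) (A : Finset (Fin n))
    (h : 2 ≤ A.card ∧ A.card ≤ n - 2) : deltaV n A = deltaV n Aᶜ := by
  have h' : 2 ≤ Aᶜ.card ∧ Aᶜ.card ≤ n - 2 := by
    rw [Finset.card_compl, Fintype.card_fin]; omega
  rw [deltaV, dif_pos h, deltaV, dif_pos h', Submodule.Quotient.eq]
  exact Submodule.subset_span (Or.inl ⟨⟨A, h⟩, ⟨Aᶜ, h'⟩, rfl, rfl⟩)

lemma keel_sum (n : ℕ) (p q r s : Fin n) (hpq : p ≠ q) (hpr : p ≠ r) (hps : p ≠ s)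
    (hqr : q ≠ r) (hqs : q ≠ s) (hrs : r ≠ s) :
    ∑ A ∈ Finset.univ.filter
        (fun A : GoodSet n => p ∈ A.1 ∧ q ∈ A.1 ∧ r ∉ A.1 ∧ s ∉ A.1),
        deltaV n A.1
    = ∑ A ∈ Finset.univ.filter
        (fun A : GoodSet n => p ∈ A.1 ∧ r ∈ A.1 ∧ q ∉ A.1 ∧ s ∉ A.1),
        deltaV n A.1 := by
  have hmem : ((∑ A ∈ Finset.univ.filter
              (fun A : GoodSet n => p ∈ A.1 ∧ q ∈ A.1 ∧ r ∉ A.1 ∧ s ∉ A.1),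
              Finsupp.single A (1:ℚ))
          - (∑ A ∈ Finset.univ.filter
              (fun A : GoodSet n => p ∈ A.1 ∧ r ∈ A.1 ∧ q ∉ A.1 ∧ s ∉ A.1),
              Finsupp.single A (1:ℚ))) ∈ keelRelations n :=
    Or.inr ⟨p, q, r, s, hpq, hpr, hps, hqr, hqs, hrs, rfl⟩
  have h0 : (Submodule.span ℚ (keelRelations n)).mkQ _ = (0 : Vn n) :=
    (Submodule.Quotient.mk_eq_zero _).mpr (Submodule.subset_span hmem)
  rw [map_sub, sub_eq_zero, map_sum, map_sum] at h0
  simpa only [deltaV_mk, Submodule.mkQ_apply] using h0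

lemma step_mem (n : ℕ) (hn : 5 ≤ n) (x i j k : Fin n)
    (hij : i ≠ j) (hik : i ≠ k) (hjk : j ≠ k)
    (hi : i ≠ x) (hj : j ≠ x) (hk : k ≠ x) :
    deltaV n {i, j} - deltaV n {i, k} ∈
      Submodule.span ℚ
        {v : Vn n | ∃ S : Finset (Fin n),
          x ∈ S ∧ 2 ≤ S.card ∧ S.card ≤ n - 3 ∧ v = deltaV n S} := by
  classical
  set W := Submodule.span ℚ
        {v : Vn n | ∃ S : Finset (Fin n),
          x ∈ S ∧ 2 ≤ S.card ∧ S.card ≤ n - 3 ∧ v = deltaV n S} with hW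
  have hcard2 : ∀ u v : Fin n, u ≠ v → ({u, v} : Finset (Fin n)).card = 2 := by
    intro u v huv; rw [Finset.card_pair huv]
  have hgood : ∀ u v : Fin n, u ≠ v →
      2 ≤ ({u, v} : Finset (Fin n)).card ∧ ({u, v} : Finset (Fin n)).card ≤ n - 2 := by
    intro u v huv; rw [hcard2 u v huv]; omega
  set e1 : GoodSet n := ⟨{i, j}, hgood i j hij⟩ with he1
  set e2 : GoodSet n := ⟨{i, k}, hgood i k hik⟩ with he2
  set t1 := Finset.univ.filter
      (fun A : GoodSet n => i ∈ A.1 ∧ j ∈ A.1 ∧ k ∉ A.1 ∧ x ∉ A.1) with ht1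
  set t2 := Finset.univ.filter
      (fun A : GoodSet n => i ∈ A.1 ∧ k ∈ A.1 ∧ j ∉ A.1 ∧ x ∉ A.1) with ht2
  have he1t1 : e1 ∈ t1 := by
    refine Finset.mem_filter.mpr ⟨Finset.mem_univ _, Finset.mem_insert_self _ _,
      Finset.mem_insert_of_mem (Finset.mem_singleton_self _), ?_, ?_⟩ <;>
      · simp only [he1, Finset.mem_insert, Finset.mem_singleton]
        rintro (h | h) <;>
          first | exact hik h.symm | exact hjk h.symm | exact hi h.symm | exact hj h.symm
  have he2t2 : e2 ∈ t2 := by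
    refine Finset.mem_filter.mpr ⟨Finset.mem_univ _, Finset.mem_insert_self _ _,
      Finset.mem_insert_of_mem (Finset.mem_singleton_self _), ?_, ?_⟩ <;>
      · simp only [he2, Finset.mem_insert, Finset.mem_singleton]
        rintro (h | h) <;>
          first | exact hij h.symm | exact hjk h | exact hi h.symm | exact hk h.symm
  have hkeel : ∑ A ∈ t1, deltaV n A.1 = ∑ A ∈ t2, deltaV n A.1 :=
    keel_sum n i j k x hij hik hi hjk hj hk
  have hs1 : ∑ A ∈ t1, deltaV n A.1
      = deltaV n {i, j} + ∑ A ∈ t1.erase e1, deltaV n A.1 := by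
    rw [← Finset.add_sum_erase _ _ he1t1]
  have hs2 : ∑ A ∈ t2, deltaV n A.1
      = deltaV n {i, k} + ∑ A ∈ t2.erase e2, deltaV n A.1 := by
    rw [← Finset.add_sum_erase _ _ he2t2]
  have hx : deltaV n {i, j} - deltaV n {i, k}
      = ∑ A ∈ t2.erase e2, deltaV n A.1 - ∑ A ∈ t1.erase e1, deltaV n A.1 := by
    rw [hs1, hs2] at hkeel
    rw [sub_eq_sub_iff_add_eq_add, hkeel]
    exact add_comm _ _
  rw [hx]
  have hterm : ∀ (t : Finset (GoodSet n)) (u v : Fin n) (e : GoodSet n),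
      e.1 = {u, v} → u ≠ v →
      (∀ A ∈ t, u ∈ A.1 ∧ v ∈ A.1 ∧ x ∉ A.1) →
      ∀ A ∈ t.erase e, deltaV n A.1 ∈ W := by
    intro t u v e hev huv hsub A hA
    obtain ⟨hAe, hAt⟩ := Finset.mem_erase.mp hA
    obtain ⟨hu, hv, hxA⟩ := hsub A hAt
    have hsubset : ({u, v} : Finset (Fin n)) ⊆ A.1 := by
      intro y hy
      rcases Finset.mem_insert.mp hy with h | h
      · exact h ▸ hu
      · exact (Finset.mem_singleton.mp h) ▸ hv
    have hcard3 : 3 ≤ A.1.card := by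
      rcases Nat.lt_or_ge A.1.card 3 with h | h
      · exfalso
        have heq : A.1 = {u, v} := by
          apply (Finset.eq_of_subset_of_card_le hsubset ?_).symm
          rw [hcard2 u v huv]
          omega
        exact hAe (Subtype.ext (heq.trans hev.symm))
      · exact h
    rw [deltaV_compl n (by omega) A.1 A.2]
    apply Submodule.subset_span
    refine ⟨A.1ᶜ, Finset.mem_compl.mpr hxA, ?_, ?_, rfl⟩ <;>
      · rw [Finset.card_compl, Fintype.card_fin]
        have := A.2.1
        have := A.2.2
        omega
  refine sub_mem (Submodule.sum_mem W ?_) (Submodule.sum_mem W ?_)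
  · exact hterm t2 i k e2 rfl hik fun A hA => by
      obtain ⟨-, h1, h2, -, h4⟩ := Finset.mem_filter.mp hA
      exact ⟨h1, h2, h4⟩
  · exact hterm t1 i j e1 rfl hij fun A hA => by
      obtain ⟨-, h1, h2, -, h4⟩ := Finset.mem_filter.mp hA
      exact ⟨h1, h2, h4⟩

/-- For `n ≥ 5`, `x ∈ Q = {1,…,n}`, and `W ⊆ Vₙ` the span of the classes `δ_S` with
`x ∈ S` and `2 ≤ |S| ≤ n-3`: for any two 2-element subsets `{a,b}`, `{c,d}` of
`Q ∖ {x}`, the classes `δ_{{a,b}}` and `δ_{{c,d}}` are congruent modulo `W`. -/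
theorem delta_pair_congruent (n : ℕ) (hn : 5 ≤ n) (x a b c d : Fin n)
    (hab : a ≠ b) (hcd : c ≠ d)
    (ha : a ≠ x) (hb : b ≠ x) (hc : c ≠ x) (hd : d ≠ x) :
    deltaV n {a, b} - deltaV n {c, d} ∈
      Submodule.span ℚ
        {v : Vn n | ∃ S : Finset (Fin n),
          x ∈ S ∧ 2 ≤ S.card ∧ S.card ≤ n - 3 ∧ v = deltaV n S} := by
  by_cases hca : c = a
  · by_cases hdb : d = b
    · rw [hca, hdb, sub_self]
      exact Submodule.zero_mem _
    · rw [hca]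
      exact step_mem n hn x a b d hab (hca ▸ hcd) (fun h => hdb h.symm) ha hb hd
  · by_cases hcb : c = b
    · by_cases hda : d = a
      · rw [hcb, hda, Finset.pair_comm a b, sub_self]
        exact Submodule.zero_mem _
      · rw [hcb, Finset.pair_comm a b]
        exact step_mem n hn x b a d hab.symm (hcb ▸ hcd) (fun h => hda h.symm) hb ha hd
    · by_cases hda : d = a
      · rw [hda, Finset.pair_comm c a]
        exact step_mem n hn x a b c hab (fun h => hca h.symm) (fun h => hcb h.symm) ha hb hc
      · have h1 := step_mem n hn x a b c hab (fun h => hca h.symm) (fun h => hcb h.symm)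
          ha hb hc
        have h2 := step_mem n hn x c a d hca hcd (fun h => hda h.symm) hc ha hd
        have heq : deltaV n {a, b} - deltaV n {c, d}
            = (deltaV n {a, b} - deltaV n {a, c}) + (deltaV n {c, a} - deltaV n {c, d}) := by
          rw [Finset.pair_comm c a]
          abel
        rw [heq]
        exact add_mem h1 h2
end

section
/- Let x ∈ ℂ with x ≠ 0 and x ≠ 1. There exists a ℂ-linear automorphism g of ℂ² whose induced map on ℙ¹(ℂ) fixes the points [1:0] and [0:1], sends [1:1] to [x:1], and sends [x:1] to [1:1], if and only if x = −1. -/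
open scoped LinearAlgebra.Projectivization

/-- The point `[a:b]` of `ℙ¹(ℂ)`. -/
noncomputable def pt1 (v : Fin 2 → ℂ) (hv : v ≠ 0) : ℙ ℂ (Fin 2 → ℂ) :=
  Projectivization.mk ℂ v hv


/-- Negation in the first coordinate, as a linear map. -/
noncomputable def negFst : (Fin 2 → ℂ) →ₗ[ℂ] (Fin 2 → ℂ) where
  toFun v := ![-v 0, v 1]
  map_add' u v := by funext i; fin_cases i <;> simp <;> ring
  map_smul' c v := by funext i; fin_cases i <;> simp [mul_comm]

lemma negFst_invol : Function.Involutive negFst := by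
  intro v; funext i; fin_cases i <;> simp [negFst]

/-- Negation in the first coordinate, as a linear equivalence. -/
noncomputable def negFstEquiv : (Fin 2 → ℂ) ≃ₗ[ℂ] (Fin 2 → ℂ) :=
  LinearEquiv.ofInvolutive negFst negFst_invol

/-- For `x ∈ ℂ`, `x ≠ 0`, `x ≠ 1`: there is a linear automorphism of `ℂ²` whose induced
map on `ℙ¹(ℂ)` fixes `[1:0]` and `[0:1]`, sends `[1:1]` to `[x:1]` and `[x:1]` to
`[1:1]`, if and only if `x = -1`. -/
theorem exists_swap_automorphism_iff (x : ℂ) (hx0 : x ≠ 0) (hx1 : x ≠ 1) :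
    (∃ g : (Fin 2 → ℂ) ≃ₗ[ℂ] (Fin 2 → ℂ),
      Projectivization.map g.toLinearMap g.injective
          (pt1 ![1,0] (fun h => one_ne_zero (congrFun h 0)))
        = pt1 ![1,0] (fun h => one_ne_zero (congrFun h 0)) ∧
      Projectivization.map g.toLinearMap g.injective
          (pt1 ![0,1] (fun h => one_ne_zero (congrFun h 1)))
        = pt1 ![0,1] (fun h => one_ne_zero (congrFun h 1)) ∧
      Projectivization.map g.toLinearMap g.injective
          (pt1 ![1,1] (fun h => one_ne_zero (congrFun h 0)))
        = pt1 ![x,1] (fun h => one_ne_zero (congrFun h 1)) ∧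
      Projectivization.map g.toLinearMap g.injective
          (pt1 ![x,1] (fun h => one_ne_zero (congrFun h 1)))
        = pt1 ![1,1] (fun h => one_ne_zero (congrFun h 0)))
      ↔ x = -1 := by
  constructor
  · rintro ⟨g, h0, h1, h2, h3⟩
    simp only [pt1, Projectivization.map_mk, Projectivization.mk_eq_mk_iff'] at h0 h1 h2 h3
    obtain ⟨a, ha⟩ := h0
    obtain ⟨b, hb⟩ := h1
    obtain ⟨c, hc⟩ := h2
    obtain ⟨d, hd⟩ := h3
    have e11 : (![1,1] : Fin 2 → ℂ) = ![1,0] + ![0,1] := by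
      funext i; fin_cases i <;> simp
    have ex1 : (![x,1] : Fin 2 → ℂ) = x • ![1,0] + ![0,1] := by
      funext i; fin_cases i <;> simp
    rw [e11, map_add] at hc
    rw [ex1, map_add, map_smul] at hd
    rw [← ha, ← hb] at hc hd
    have hc0 := congrFun hc 0
    have hc1 := congrFun hc 1
    have hd0 := congrFun hd 0
    have hd1 := congrFun hd 1
    simp [Matrix.smul_cons] at hc0 hc1 hd0 hd1
    -- hc0 : c * x = a, hc1 : c = b, hd0 : d = x * a, hd1 : d = b
    have hane : a ≠ 0 := by
      rintro rfl
      have hz : (g : (Fin 2 → ℂ) →ₗ[ℂ] (Fin 2 → ℂ)) ![1,0] = 0 :=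
        ha.symm.trans (zero_smul ℂ _)
      have h10 : (![1,0] : Fin 2 → ℂ) = 0 := g.injective (by simpa using hz)
      exact one_ne_zero (congrFun h10 0)
    have ha2 : a = x * x * a := by linear_combination -hc0 + x * hc1 - x * hd1 + x * hd0
    have hx2 : (x * x - 1) * a = 0 := by linear_combination -ha2
    rcases mul_eq_zero.mp hx2 with h | h
    · have hfac : (x - 1) * (x + 1) = 0 := by linear_combination h
      rcases mul_eq_zero.mp hfac with h' | h'
      · exact absurd (sub_eq_zero.mp h') hx1
      · exact eq_neg_of_add_eq_zero_left h'
    · exact absurd h hane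
  · rintro rfl
    refine ⟨negFstEquiv, ?_, ?_, ?_, ?_⟩ <;>
        simp only [pt1, Projectivization.map_mk, Projectivization.mk_eq_mk_iff']
    · exact ⟨-1, by funext i; fin_cases i <;> simp [negFstEquiv, negFst]⟩
    · exact ⟨1, by funext i; fin_cases i <;> simp [negFstEquiv, negFst]⟩
    · exact ⟨1, by funext i; fin_cases i <;> simp [negFstEquiv, negFst]⟩
    · exact ⟨1, by funext i; fin_cases i <;> simp [negFstEquiv, negFst]⟩
end

section
/- Let x, y ∈ ℂ with x, y ∉ {0,1} and x ≠ y. There exists a ℂ-linear automorphism g of ℂ² whose induced map on ℙ¹(ℂ) fixes [1:0] and [0:1], maps the three-element set {[1:1],[x:1],[y:1]} into itself, and does not fix [1:1], if and only if x² + x + 1 = 0 and y = x². -/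
open scoped LinearAlgebra.Projectivization

lemma pt1_affine_eq_iff (a b : ℂ) (ha : (![a,1] : Fin 2 → ℂ) ≠ 0)
    (hb : (![b,1] : Fin 2 → ℂ) ≠ 0) : pt1 ![a,1] ha = pt1 ![b,1] hb ↔ a = b := by
  rw [pt1, pt1, Projectivization.mk_eq_mk_iff']
  constructor
  · rintro ⟨t, ht⟩
    have h0 := congrFun ht 0
    have h1 := congrFun ht 1
    simp [Matrix.smul_cons] at h0 h1
    subst h1; simpa using h0.symm
  · rintro rfl; exact ⟨1, by simp⟩

lemma key_alg {c x y : ℂ} (hx0 : x ≠ 0) (hx1 : x ≠ 1) (hy0 : y ≠ 0) (hy1 : y ≠ 1)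
    (hxy : x ≠ y) (hc1 : c ≠ 1)
    (h1 : c = 1 ∨ c = x ∨ c = y)
    (h2 : c * x = 1 ∨ c * x = x ∨ c * x = y)
    (h3 : c * y = 1 ∨ c * y = x ∨ c * y = y) :
    x ^ 2 + x + 1 = 0 ∧ y = x ^ 2 := by
  rcases h1 with hc | hc | hc
  · exact absurd hc hc1
  · rw [hc] at h2 h3
    rcases h2 with h2 | h2 | h2
    · rcases h3 with h3 | h3 | h3
      · exact absurd (mul_left_cancel₀ hx0 (h3.trans h2.symm)) (Ne.symm hxy)
      · exact absurd (mul_left_cancel₀ hx0 (by rw [h3, mul_one])) hy1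
      · rcases mul_eq_zero.mp (show (x - 1) * y = 0 by linear_combination h3) with h | h
        · exact absurd (by linear_combination h) hx1
        · exact absurd h hy0
    · exact absurd (mul_left_cancel₀ hx0 (by rw [h2, mul_one])) hx1
    · rcases h3 with h3 | h3 | h3
      · have hx3 : x ^ 3 = 1 := by linear_combination h3 + x * h2
        refine ⟨?_, by linear_combination -h2⟩
        rcases mul_eq_zero.mp (show (x - 1) * (x ^ 2 + x + 1) = 0 by
            linear_combination hx3) with h | h
        · exact absurd (by linear_combination h) hx1
        · exact h
      · exact absurd (mul_left_cancel₀ hx0 (by rw [h3, mul_one])) hy1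
      · rcases mul_eq_zero.mp (show (x - 1) * y = 0 by linear_combination h3) with h | h
        · exact absurd (by linear_combination h) hx1
        · exact absurd h hy0
  · rw [hc] at h2 h3
    rcases h3 with h3 | h3 | h3
    · rcases h2 with h2 | h2 | h2
      · exact absurd (mul_left_cancel₀ hy0 (h2.trans h3.symm)) hxy
      · rcases mul_eq_zero.mp (show (y - 1) * x = 0 by linear_combination h2) with h | h
        · exact absurd (by linear_combination h) hy1
        · exact absurd h hx0
      · exact absurd (mul_left_cancel₀ hy0 (by rw [h2, mul_one])) hx1.symm
    · rcases h2 with h2 | h2 | h2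
      · have hy3 : y ^ 3 = 1 := by linear_combination h2 + y * h3
        have hquad : y ^ 2 + y + 1 = 0 := by
          rcases mul_eq_zero.mp (show (y - 1) * (y ^ 2 + y + 1) = 0 by
              linear_combination hy3) with h | h
          · exact absurd (by linear_combination h) hy1
          · exact h
        constructor
        · linear_combination y * hy3 + hquad - (x + y ^ 2 + 1) * h3
        · linear_combination -y * hy3 + (y ^ 2 + x) * h3
      · rcases mul_eq_zero.mp (show (y - 1) * x = 0 by linear_combination h2) with h | h
        · exact absurd (by linear_combination h) hy1
        · exact absurd h hx0
      · exact absurd (mul_left_cancel₀ hy0 (by rw [h2, mul_one])) hx1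
    · exact absurd (mul_left_cancel₀ hy0 (by rw [h3, mul_one])) hy1

/-- For `x, y ∈ ℂ ∖ {0,1}` with `x ≠ y`: there is a linear automorphism of `ℂ²` whose
induced map on `ℙ¹(ℂ)` fixes `[1:0]` and `[0:1]`, maps the three-element set
`{[1:1],[x:1],[y:1]}` into itself, and does not fix `[1:1]`, if and only if
`x² + x + 1 = 0` and `y = x²`. -/
theorem exists_nontrivial_permuting_automorphism_iff (x y : ℂ)
    (hx0 : x ≠ 0) (hx1 : x ≠ 1) (hy0 : y ≠ 0) (hy1 : y ≠ 1) (hxy : x ≠ y) :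
    (∃ g : (Fin 2 → ℂ) ≃ₗ[ℂ] (Fin 2 → ℂ),
      Projectivization.map g.toLinearMap g.injective
          (pt1 ![1,0] (fun h => one_ne_zero (congrFun h 0)))
        = pt1 ![1,0] (fun h => one_ne_zero (congrFun h 0)) ∧
      Projectivization.map g.toLinearMap g.injective
          (pt1 ![0,1] (fun h => one_ne_zero (congrFun h 1)))
        = pt1 ![0,1] (fun h => one_ne_zero (congrFun h 1)) ∧
      (∀ p ∈ ({pt1 ![1,1] (fun h => one_ne_zero (congrFun h 0)),
               pt1 ![x,1] (fun h => one_ne_zero (congrFun h 1)),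
               pt1 ![y,1] (fun h => one_ne_zero (congrFun h 1))} :
            Set (ℙ ℂ (Fin 2 → ℂ))),
        Projectivization.map g.toLinearMap g.injective p ∈
          ({pt1 ![1,1] (fun h => one_ne_zero (congrFun h 0)),
            pt1 ![x,1] (fun h => one_ne_zero (congrFun h 1)),
            pt1 ![y,1] (fun h => one_ne_zero (congrFun h 1))} :
            Set (ℙ ℂ (Fin 2 → ℂ)))) ∧
      Projectivization.map g.toLinearMap g.injective
          (pt1 ![1,1] (fun h => one_ne_zero (congrFun h 0)))
        ≠ pt1 ![1,1] (fun h => one_ne_zero (congrFun h 0)))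
      ↔ (x ^ 2 + x + 1 = 0 ∧ y = x ^ 2) := by
  constructor
  · rintro ⟨g, h10, h01, hmem, hne⟩
    -- g fixes the coordinate axes, so it is diagonal
    simp only [pt1, Projectivization.map_mk, Projectivization.mk_eq_mk_iff'] at h10 h01
    obtain ⟨a, ha⟩ := h10
    obtain ⟨b, hb⟩ := h01
    have ha0 : a ≠ 0 := by
      rintro rfl
      rw [zero_smul] at ha
      have := g.injective.eq_iff.mp
        (show g.toLinearMap ![1,0] = g.toLinearMap 0 by rw [map_zero, ← ha])
      exact one_ne_zero (congrFun this 0)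
    have hb0 : b ≠ 0 := by
      rintro rfl
      rw [zero_smul] at hb
      have := g.injective.eq_iff.mp
        (show g.toLinearMap ![0,1] = g.toLinearMap 0 by rw [map_zero, ← hb])
      exact one_ne_zero (congrFun this 1)
    set c : ℂ := a / b with hc
    have himg : ∀ (t : ℂ) (hv : (![t,1] : Fin 2 → ℂ) ≠ 0),
        Projectivization.map g.toLinearMap g.injective (pt1 ![t,1] hv)
          = pt1 ![c * t, 1] (fun h => one_ne_zero (congrFun h 1)) := by
      intro t hv
      rw [pt1, pt1, Projectivization.map_mk, Projectivization.mk_eq_mk_iff']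
      refine ⟨b, ?_⟩
      have hdecomp : (![t,1] : Fin 2 → ℂ) = t • ![1,0] + ![0,1] := by
        funext i; fin_cases i <;> simp
      rw [hdecomp, map_add, map_smul, ← ha, ← hb]
      funext i; fin_cases i <;>
        simp [Matrix.smul_cons, hc] <;> field_simp <;> ring
    have hmem1 := hmem _ (Set.mem_insert _ _)
    have hmemx := hmem _ (Set.mem_insert_of_mem _ (Set.mem_insert _ _))
    have hmemy := hmem _ (Set.mem_insert_of_mem _ (Set.mem_insert_of_mem _ rfl))
    rw [himg 1] at hmem1
    rw [himg x] at hmemx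
    rw [himg y] at hmemy
    rw [himg 1] at hne
    simp only [Set.mem_insert_iff, Set.mem_singleton_iff, pt1_affine_eq_iff, mul_one] at hmem1 hmemx hmemy
    have hc1 : c ≠ 1 := fun h => hne (by rw [(pt1_affine_eq_iff _ _ _ _)]; rw [mul_one]; exact h)
    exact key_alg hx0 hx1 hy0 hy1 hxy hc1 hmem1 hmemx hmemy
  · rintro ⟨hq, hy⟩
    subst hy
    have hx3 : x ^ 3 = 1 := by linear_combination (x - 1) * hq
    have hd : ∀ i : Fin 2, (![x, 1] : Fin 2 → ℂ) i ≠ 0 := by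
      intro i; fin_cases i <;> simp [hx0]
    refine ⟨LinearEquiv.piCongrRight (fun i => LinearEquiv.smulOfNeZero ℂ ℂ (![x,1] i) (hd i)),
      ?_, ?_, ?_, ?_⟩
    · rw [pt1, Projectivization.map_mk, Projectivization.mk_eq_mk_iff']
      exact ⟨x, by funext i; fin_cases i <;> simp [Matrix.smul_cons]⟩
    · rw [pt1, Projectivization.map_mk, Projectivization.mk_eq_mk_iff']
      exact ⟨1, by funext i; fin_cases i <;> simp [Matrix.smul_cons]⟩
    · intro p hp
      simp only [Set.mem_insert_iff, Set.mem_singleton_iff] at hp ⊢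
      rcases hp with rfl | rfl | rfl
      · refine Or.inr (Or.inl ?_)
        rw [pt1, pt1, Projectivization.map_mk, Projectivization.mk_eq_mk_iff']
        exact ⟨1, by funext i; fin_cases i <;> simp [Matrix.smul_cons]⟩
      · refine Or.inr (Or.inr ?_)
        rw [pt1, pt1, Projectivization.map_mk, Projectivization.mk_eq_mk_iff']
        exact ⟨1, by funext i; fin_cases i <;> simp [Matrix.smul_cons] <;> ring⟩
      · refine Or.inl ?_
        rw [pt1, pt1, Projectivization.map_mk, Projectivization.mk_eq_mk_iff']
        refine ⟨1, by funext i; fin_cases i <;> simp [Matrix.smul_cons] <;> linear_combination -hx3⟩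
    · intro h
      rw [pt1, Projectivization.map_mk, Projectivization.mk_eq_mk_iff'] at h
      obtain ⟨t, ht⟩ := h
      have h0 := congrFun ht 0
      have h1 := congrFun ht 1
      simp [Matrix.smul_cons] at h0 h1
      subst h1
      exact hx1 h0.symm
end
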